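/- arXiv:2007.02989 — 7 statements merged into one kernel-verified Lean document; each statement's English description precedes it below -/
import Mathlib

section
/- Let a : [0,∞) → [0,∞) be a smooth function such that a(t) > 0 for every t ≥ t₀ (for some t₀ > 0), and suppose that lim_{t→∞} a'(t)/a(t)² = 0. Then lim_{t→∞} f_a'(t)/(a(t) f_a(t)) = 1. -/
open Filter Set

lemma key_mono {F G F' G' : ℝ → ℝ} {T t : ℝ} (hTt : T ≤ t)
    (hF : ∀ s ∈ Set.Icc T t, HasDerivAt F (F' s) s)
    (hG : ∀ s ∈ Set.Icc T t, HasDerivAt G (G' s) s)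
    (hle : ∀ s ∈ Set.Icc T t, F' s ≤ G' s) :
    F t - F T ≤ G t - G T := by
  have hd : ∀ s ∈ Set.Icc T t, HasDerivAt (fun x => F x - G x) (F' s - G' s) s :=
    fun s hs => (hF s hs).sub (hG s hs)
  have h := antitoneOn_of_deriv_nonpos (convex_Icc T t)
    (fun s hs => (hd s hs).continuousAt.continuousWithinAt)
    (fun s hs => by
      have hs' : s ∈ Set.Icc T t := interior_subset hs
      exact (hd s hs').differentiableAt.differentiableWithinAt)
    (fun s hs => by
      have hs' : s ∈ Set.Icc T t := interior_subset hs
      rw [(hd s hs').deriv]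
      linarith [hle s hs'])
  have h2 := h (left_mem_Icc.2 hTt) (right_mem_Icc.2 hTt) hTt
  simp only [] at h2
  linarith

lemma key_barrier {F F' : ℝ → ℝ} {M t₁ : ℝ}
    (hF : ∀ s, t₁ ≤ s → HasDerivAt F (F' s) s)
    (hbound : ∀ s, t₁ ≤ s → F s = M → F' s < 0)
    (h0 : F t₁ ≤ M) : ∀ t, t₁ ≤ t → F t ≤ M := by
  intro t ht
  have := image_le_of_deriv_right_lt_deriv_boundary'
    (f := F) (f' := F') (a := t₁) (b := t) (B := fun _ => M) (B' := fun _ => 0)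
    (fun s hs => (hF s hs.1).continuousAt.continuousWithinAt)
    (fun s hs => (hF s hs.1).hasDerivWithinAt)
    h0 continuousOn_const
    (fun s _ => hasDerivWithinAt_const s _ M)
    (fun s hs hFs => hbound s hs.1 hFs)
  exact this (right_mem_Icc.2 ht)


set_option maxHeartbeats 1000000 in
/-- Let `a : [0,∞) → [0,∞)` be smooth with `a(t) > 0` for `t ≥ t₀`,
and suppose `a'(t)/a(t)² → 0` as `t → ∞`.  Let `f` be the Jacobi solution with
`f 0 = 0`, `f' 0 = 1`, `f'' = a² f` (hence `f > 0` and `f' ≥ 1` on `(0,∞)`).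
Then `f'(t)/(a(t) f(t)) → 1` as `t → ∞`. -/
theorem jacobi_quotient_tendsto_one
    (a f : ℝ → ℝ)
    (ha_smooth : ContDiff ℝ (⊤ : ℕ∞) a)
    (ha_nonneg : ∀ t, 0 ≤ t → 0 ≤ a t)
    (t₀ : ℝ) (ht₀ : 0 < t₀)
    (ha_pos : ∀ t, t₀ ≤ t → 0 < a t)
    (hf_smooth : ContDiff ℝ (⊤ : ℕ∞) f)
    (hf0 : f 0 = 0) (hf'0 : deriv f 0 = 1)
    (hjacobi : ∀ t, 0 ≤ t → deriv (deriv f) t = (a t)^2 * f t)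
    (hf_pos : ∀ t, 0 < t → 0 < f t)
    (hf'_ge : ∀ t, 0 < t → 1 ≤ deriv f t)
    (hlim : Tendsto (fun t => deriv a t / (a t)^2) atTop (nhds 0)) :
    Tendsto (fun t => deriv f t / (a t * f t)) atTop (nhds 1) := by
  set e : ℝ → ℝ := fun t => deriv a t / (a t)^2 with he
  set g : ℝ → ℝ := fun t => deriv f t / (a t * f t) with hgdef
  have hfd : Differentiable ℝ f := hf_smooth.differentiable (by simp)
  have hf'd : Differentiable ℝ (deriv f) :=
    ((contDiff_infty_iff_deriv.mp (hf_smooth.of_le (by simp))).2).differentiable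
      (by simp)
  have had : Differentiable ℝ a := ha_smooth.differentiable (by simp)
  -- derivative of g
  have hg' : ∀ t, t₀ ≤ t → HasDerivAt g (a t * (1 - (g t)^2 - e t * g t)) t := by
    intro t ht
    have hat : 0 < a t := ha_pos t ht
    have hft : 0 < f t := hf_pos t (lt_of_lt_of_le ht₀ ht)
    have h1 : HasDerivAt (deriv f) ((a t)^2 * f t) t := by
      have := (hf'd t).hasDerivAt
      rwa [hjacobi t (le_of_lt (lt_of_lt_of_le ht₀ ht))] at this
    have h2 : HasDerivAt (fun s => a s * f s) (deriv a t * f t + a t * deriv f t) t :=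
      (had t).hasDerivAt.mul (hfd t).hasDerivAt
    have h3 : HasDerivAt (fun s => deriv f s / (a s * f s)) ((a t ^ 2 * f t * (a t * f t) - deriv f t * (deriv a t * f t + a t * deriv f t)) / (a t * f t) ^ 2) t := h1.div h2 (by positivity)
    convert h3 using 1
    simp only [hgdef, he]
    field_simp
    ring
  have hgpos : ∀ t, t₀ ≤ t → 0 < g t := by
    intro t ht
    have := hf'_ge t (lt_of_lt_of_le ht₀ ht)
    exact div_pos (by linarith) (mul_pos (ha_pos t ht) (hf_pos t (lt_of_lt_of_le ht₀ ht)))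
  rw [Metric.tendsto_nhds]
  intro ε hε
  set ε' : ℝ := min (ε/2) 1 with hε'def
  have hε' : 0 < ε' := lt_min (by linarith) one_pos
  have hε'1 : ε' ≤ 1 := min_le_right _ _
  have hε'ε : ε' < ε := lt_of_le_of_lt (min_le_left _ _) (by linarith)
  set δ : ℝ := ε'/2 with hδdef
  have hδ : 0 < δ := by positivity
  -- find T1 ≥ t₀ with |e t| ≤ δ for t ≥ T1
  have hev : ∀ᶠ t in atTop, |e t| ≤ δ := by
    have h := Metric.tendsto_nhds.mp hlim δ hδ
    filter_upwards [h] with t ht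
    rw [Real.dist_eq, sub_zero] at ht
    exact ht.le
  obtain ⟨T0, hT0⟩ := eventually_atTop.mp (hev.and (eventually_ge_atTop t₀))
  set T1 : ℝ := max T0 t₀ with hT1def
  have hT1t₀ : t₀ ≤ T1 := le_max_right _ _
  have hT1e : ∀ t, T1 ≤ t → |e t| ≤ δ := fun t ht =>
    (hT0 t (le_trans (le_max_left _ _) ht)).1
  have hT1a : ∀ t, T1 ≤ t → 0 < a t := fun t ht => ha_pos t (le_trans hT1t₀ ht)
  set C : ℝ := (a T1)⁻¹ with hCdef
  have hC : 0 < C := inv_pos.2 (hT1a T1 le_rfl)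
  -- lower bound on a
  have hlin : ∀ s, 0 < C + δ * (s - T1) → HasDerivAt (fun x => C + δ * (x - T1)) δ s := by
    intro s _
    simpa using ((hasDerivAt_id s).sub_const T1).const_mul δ |>.const_add C
  have hlinpos : ∀ s, T1 ≤ s → 0 < C + δ * (s - T1) := by
    intro s hs
    have : 0 ≤ δ * (s - T1) := mul_nonneg hδ.le (by linarith)
    linarith
  have haLB : ∀ t, T1 ≤ t → (C + δ * (t - T1))⁻¹ ≤ a t := by
    intro t ht
    have hmono := key_mono (F := fun s => (a s)⁻¹) (G := fun x => C + δ * (x - T1))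
      (F' := fun s => -(deriv a s) / (a s)^2) (G' := fun _ => δ) ht
      (fun s hs => ((had s).hasDerivAt.inv (ne_of_gt (hT1a s hs.1))))
      (fun s hs => hlin s (hlinpos s hs.1))
      (fun s hs => by
        beta_reduce
        have h1 := hT1e s hs.1
        have h2 := abs_le.mp h1
        have h3 : -(deriv a s) / (a s)^2 = -(e s) := by rw [he]; ring
        rw [h3]; linarith [h2.1])
    simp only [sub_self, mul_zero, add_zero] at hmono
    have h4 : (a t)⁻¹ ≤ C + δ * (t - T1) := by
      rw [hCdef] at hmono ⊢
      linarith
    have h5 := inv_anti₀ (inv_pos.2 (hT1a t ht)) h4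
    rwa [inv_inv] at h5
  -- quadratic bounds
  have hQ1 : ∀ t, T1 ≤ t → 1 + ε' ≤ g t →
      a t * (1 - (g t)^2 - e t * g t) ≤ -ε' * a t := by
    intro t ht hu
    have hat := hT1a t ht
    have h2 := abs_le.mp (hT1e t ht)
    have hupos : 0 < g t := by linarith
    have key : 1 - (g t)^2 - e t * g t ≤ -ε' := by
      have h3 : -(e t) * g t ≤ δ * g t :=
        mul_le_mul_of_nonneg_right (by linarith [h2.1]) hupos.le
      nlinarith [mul_nonneg (by linarith : (0:ℝ) ≤ g t - 1 - ε') (by linarith : (0:ℝ) ≤ g t)]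
    nlinarith
  have hQ2 : ∀ t, T1 ≤ t → g t ≤ 1 - ε' →
      (ε'/2) * a t ≤ a t * (1 - (g t)^2 - e t * g t) := by
    intro t ht hu
    have hat := hT1a t ht
    have h2 := abs_le.mp (hT1e t ht)
    have hupos : 0 < g t := hgpos t (le_trans hT1t₀ ht)
    have key : ε'/2 ≤ 1 - (g t)^2 - e t * g t := by
      have h3 : e t * g t ≤ δ * g t :=
        mul_le_mul_of_nonneg_right (by linarith [h2.2]) hupos.le
      nlinarith [mul_nonneg (by linarith : (0:ℝ) ≤ 1 - ε' - g t) hupos.le]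
    nlinarith
  -- log function derivative
  have hlog : ∀ s, T1 ≤ s → HasDerivAt (fun x => Real.log (C + δ * (x - T1)))
      ((C + δ * (s - T1))⁻¹ * δ) s := by
    intro s hs
    have h1 := hlin s (hlinpos s hs)
    have := (Real.hasDerivAt_log (ne_of_gt (hlinpos s hs))).comp s h1
    exact this
  -- upper entering
  have henterU : ∃ t₁, T1 ≤ t₁ ∧ g t₁ ≤ 1 + ε' := by
    by_contra hcon
    push_neg at hcon
    obtain ⟨X, hX⟩ : ∃ X, X = Real.log C + g T1 := ⟨_, rfl⟩
    obtain ⟨t, ht⟩ : ∃ t, t = T1 + Real.exp X / δ := ⟨_, rfl⟩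
    have hexpδ : 0 < Real.exp X / δ := div_pos (Real.exp_pos X) hδ
    have htT1 : T1 ≤ t := by rw [ht]; linarith
    have hlogt : X < Real.log (C + δ * (t - T1)) := by
      have h1 : C + δ * (t - T1) = C + Real.exp X := by
        rw [ht]; field_simp; ring
      rw [h1]
      calc X = Real.log (Real.exp X) := (Real.log_exp X).symm
        _ < Real.log (C + Real.exp X) :=
          Real.log_lt_log (Real.exp_pos X) (by linarith)
    have hmono := key_mono (F := g) (G := fun x => -2 * Real.log (C + δ * (x - T1)))
      (F' := fun s => a s * (1 - (g s)^2 - e s * g s))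
      (G' := fun s => -2 * ((C + δ * (s - T1))⁻¹ * δ)) htT1
      (fun s hs => hg' s (le_trans hT1t₀ hs.1))
      (fun s hs => (hlog s hs.1).const_mul (-2))
      (fun s hs => by
        beta_reduce
        have h1 := hQ1 s hs.1 (hcon s hs.1).le
        have h2 := haLB s hs.1
        have h3 : -ε' * a s ≤ -ε' * (C + δ * (s - T1))⁻¹ := by nlinarith
        have h4 : -2 * ((C + δ * (s - T1))⁻¹ * δ) = -ε' * (C + δ * (s - T1))⁻¹ := by
          rw [hδdef]; ring
        rw [h4]; linarith)
    simp only [sub_self, mul_zero, add_zero] at hmono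
    have hgT1 : 0 < g T1 := hgpos T1 hT1t₀
    have h5 : g t ≤ g T1 - 2 * (Real.log (C + δ * (t - T1)) - Real.log C) := by linarith
    have h6 := hcon t htT1
    rw [hX] at hlogt
    linarith
  obtain ⟨t₁, ht₁T, ht₁⟩ := henterU
  -- upper invariance
  have hUP : ∀ t, t₁ ≤ t → g t ≤ 1 + ε' := by
    apply key_barrier (F' := fun s => a s * (1 - (g s)^2 - e s * g s))
    · exact fun s hs => hg' s (le_trans hT1t₀ (le_trans ht₁T hs))
    · intro s hs hFs
      beta_reduce at hFs ⊢
      have h1 := hQ1 s (le_trans ht₁T hs) (le_of_eq hFs.symm)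
      have h2 := hT1a s (le_trans ht₁T hs)
      nlinarith
    · exact ht₁
  -- lower entering
  have henterL : ∃ t₂, T1 ≤ t₂ ∧ 1 - ε' ≤ g t₂ := by
    by_contra hcon
    push_neg at hcon
    obtain ⟨X, hX⟩ : ∃ X, X = Real.log C + 2 := ⟨_, rfl⟩
    obtain ⟨t, ht⟩ : ∃ t, t = T1 + Real.exp X / δ := ⟨_, rfl⟩
    have hexpδ : 0 < Real.exp X / δ := div_pos (Real.exp_pos X) hδ
    have htT1 : T1 ≤ t := by rw [ht]; linarith
    have hlogt : X < Real.log (C + δ * (t - T1)) := by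
      have h1 : C + δ * (t - T1) = C + Real.exp X := by
        rw [ht]; field_simp; ring
      rw [h1]
      calc X = Real.log (Real.exp X) := (Real.log_exp X).symm
        _ < Real.log (C + Real.exp X) :=
          Real.log_lt_log (Real.exp_pos X) (by linarith)
    have hmono := key_mono (F := fun x => Real.log (C + δ * (x - T1))) (G := g)
      (F' := fun s => (C + δ * (s - T1))⁻¹ * δ)
      (G' := fun s => a s * (1 - (g s)^2 - e s * g s)) htT1
      (fun s hs => hlog s hs.1)
      (fun s hs => hg' s (le_trans hT1t₀ hs.1))
      (fun s hs => by
        beta_reduce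
        have h1 := hQ2 s hs.1 (hcon s hs.1).le
        have h2 := haLB s hs.1
        have h3 : (ε'/2) * (C + δ * (s - T1))⁻¹ ≤ (ε'/2) * a s := by nlinarith
        have h4 : (C + δ * (s - T1))⁻¹ * δ = (ε'/2) * (C + δ * (s - T1))⁻¹ := by
          rw [hδdef]; ring
        rw [h4]; linarith)
    simp only [sub_self, mul_zero, add_zero] at hmono
    have hgT1 : 0 < g T1 := hgpos T1 hT1t₀
    have h6 := hcon t htT1
    have h7 := hcon T1 le_rfl
    rw [hX] at hlogt
    linarith
  obtain ⟨t₂, ht₂T, ht₂⟩ := henterL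
  -- lower invariance
  have hLO : ∀ t, t₂ ≤ t → 1 - ε' ≤ g t := by
    have := key_barrier (F := fun s => -(g s))
      (F' := fun s => -(a s * (1 - (g s)^2 - e s * g s))) (M := -(1 - ε')) (t₁ := t₂)
      (fun s hs => (hg' s (le_trans hT1t₀ (le_trans ht₂T hs))).neg)
      (fun s hs hFs => by
        beta_reduce at hFs ⊢
        have hgs : g s = 1 - ε' := by linarith [hFs]
        have h1 := hQ2 s (le_trans ht₂T hs) (le_of_eq hgs)
        have h2 := hT1a s (le_trans ht₂T hs)
        nlinarith)
      (by beta_reduce; linarith)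
    intro t ht
    have h5 := this t ht
    beta_reduce at h5
    linarith
  -- conclusion
  filter_upwards [eventually_ge_atTop (max t₁ t₂)] with t ht
  have h1 := hUP t (le_trans (le_max_left _ _) ht)
  have h2 := hLO t (le_trans (le_max_right _ _) ht)
  rw [Real.dist_eq, abs_sub_lt_iff]
  constructor <;> linarith
end

section
/- Let a : [0,∞) → [0,∞) be a smooth function such that a(t) > 0 for every t ≥ t₀ (for some t₀ > 0). Suppose there are constants c > 0 and t₁ ≥ t₀ such that a'(t) ≤ −c·a(t)² for all t ≥ t₁, and assume furthermore that either (a) ∫₀^∞ a(t) dt = ∞, or (b) ∫₀^∞ a(t) dt < ∞ and f_a'(t) → ∞ as t → ∞. Then limsup_{t→∞} a(t) f_a(t)/f_a'(t) ≤ 1/k, where k = c/2 + √(1 + c²/4) > 1. -/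
open Filter

section
open Set MeasureTheory intervalIntegral

lemma jacobi_aux_barrier {g : ℝ → ℝ} {L T t₂ : ℝ} (hT : T ≤ t₂)
    (hcont : ContinuousOn g (Set.Ici T))
    (hdiff : ∀ x, T < x → DifferentiableAt ℝ g x)
    (hder : ∀ x, T ≤ x → L ≤ g x → deriv g x ≤ 0)
    (h₂ : g t₂ ≤ L) : ∀ t, t₂ ≤ t → g t ≤ L := by
  intro t₃ ht₃
  by_contra hgt
  push_neg at hgt
  set S : Set ℝ := Icc t₂ t₃ ∩ g ⁻¹' (Iic L) with hS
  have hne : t₂ ∈ S := ⟨⟨le_refl _, ht₃⟩, h₂⟩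
  have hbdd : BddAbove S := BddAbove.mono (inter_subset_left) bddAbove_Icc
  have hclosed : IsClosed S := by
    refine ContinuousOn.preimage_isClosed_of_isClosed ?_ isClosed_Icc isClosed_Iic
    exact hcont.mono (fun x hx => le_trans hT hx.1)
  set s := sSup S with hs
  have hsS : s ∈ S := hclosed.csSup_mem ⟨t₂, hne⟩ hbdd
  have hst₃ : s < t₃ := lt_of_le_of_ne hsS.1.2 (fun h => by rw [h] at hsS; exact absurd hsS.2 (not_le.mpr hgt))
  have habove : ∀ x ∈ Ioc s t₃, L < g x := by
    intro x hx
    by_contra hle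
    push_neg at hle
    have : x ∈ S := ⟨⟨le_trans hsS.1.1 hx.1.le, hx.2⟩, hle⟩
    exact absurd (le_csSup hbdd this) (not_le.mpr hx.1)
  have hTs : T ≤ s := le_trans hT hsS.1.1
  have hanti : AntitoneOn g (Icc s t₃) := by
    apply antitoneOn_of_deriv_nonpos (convex_Icc s t₃)
    · exact hcont.mono (fun x hx => le_trans hTs hx.1)
    · intro x hx
      rw [interior_Icc] at hx
      exact (hdiff x (lt_of_le_of_lt hTs hx.1)).differentiableWithinAt
    · intro x hx
      rw [interior_Icc] at hx
      exact hder x (le_trans hTs hx.1.le) (habove x ⟨hx.1, hx.2.le⟩).le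
  have := hanti (left_mem_Icc.mpr hst₃.le) (right_mem_Icc.mpr hst₃.le) hst₃.le
  exact absurd (le_trans this hsS.2) (not_le.mpr hgt)

set_option maxHeartbeats 2000000 in
/-- Let `a : [0,∞) → [0,∞)` be smooth with `a(t) > 0` for `t ≥ t₀`.
Suppose `a'(t) ≤ -c a(t)²` for all `t ≥ t₁ ≥ t₀` (with `c > 0`), and that either
(a) `∫₀^∞ a = ∞`, or (b) `∫₀^∞ a < ∞` and `f'(t) → ∞`, where `f` is the Jacobi
solution with `f 0 = 0`, `f' 0 = 1`, `f'' = a² f` (hence `f > 0`, `f' ≥ 1` on `(0,∞)`).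
Then `limsup_{t→∞} a(t) f(t)/f'(t) ≤ 1/k`, where `k = c/2 + √(1 + c²/4) > 1`. -/
theorem jacobi_quotient_limsup_le
    (a f : ℝ → ℝ)
    (ha_smooth : ContDiff ℝ (⊤ : ℕ∞) a)
    (ha_nonneg : ∀ t, 0 ≤ t → 0 ≤ a t)
    (t₀ : ℝ) (ht₀ : 0 < t₀)
    (ha_pos : ∀ t, t₀ ≤ t → 0 < a t)
    (hf_smooth : ContDiff ℝ (⊤ : ℕ∞) f)
    (hf0 : f 0 = 0) (hf'0 : deriv f 0 = 1)
    (hjacobi : ∀ t, 0 ≤ t → deriv (deriv f) t = (a t)^2 * f t)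
    (hf_pos : ∀ t, 0 < t → 0 < f t)
    (hf'_ge : ∀ t, 0 < t → 1 ≤ deriv f t)
    (c t₁ : ℝ) (hc : 0 < c) (ht₁ : t₀ ≤ t₁)
    (hdecay : ∀ t, t₁ ≤ t → deriv a t ≤ -c * (a t)^2)
    (halt : (¬ MeasureTheory.IntegrableOn a (Set.Ici 0)) ∨
      (MeasureTheory.IntegrableOn a (Set.Ici 0) ∧
        Tendsto (fun t => deriv f t) atTop atTop)) :
    Filter.limsup (fun t => a t * f t / deriv f t) atTop
      ≤ 1 / (c / 2 + Real.sqrt (1 + c^2 / 4)) := by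
  -- notation
  set k : ℝ := c / 2 + Real.sqrt (1 + c^2 / 4) with hk_def
  set g : ℝ → ℝ := fun t => a t * f t / deriv f t with hg_def
  -- facts about k
  have hsq : Real.sqrt (1 + c^2/4) ^ 2 = 1 + c^2/4 := Real.sq_sqrt (by positivity)
  have hs1 : 1 ≤ Real.sqrt (1 + c^2/4) := by
    nlinarith [Real.sqrt_nonneg (1 + c^2/4)]
  have hk1 : 1 < k := by simp only [hk_def]; linarith
  have hk0 : 0 < k := by linarith
  have hksq : k^2 = c*k + 1 := by simp only [hk_def]; nlinarith
  have hkc : c = k - 1/k := by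
    field_simp
    nlinarith
  -- differentiability facts
  have hfi : ContDiff ℝ (⊤:ℕ∞) f := hf_smooth.of_le (by simp)
  have hai : ContDiff ℝ (⊤:ℕ∞) a := ha_smooth.of_le (by simp)
  have hfd : Differentiable ℝ f := hf_smooth.differentiable (by simp)
  have hf'c := (contDiff_infty_iff_deriv.mp hfi).2
  have hf'd : Differentiable ℝ (deriv f) := (contDiff_infty_iff_deriv.mp hf'c).1
  have had : Differentiable ℝ a := ha_smooth.differentiable (by simp)
  have ha'c : Continuous (deriv a) := ((contDiff_infty_iff_deriv.mp hai).2).continuous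
  have hfc : Continuous f := hfd.continuous
  have hac : Continuous a := had.continuous
  have hf'cc : Continuous (deriv f) := hf'c.continuous
  -- base point
  set T₀ : ℝ := max t₁ 1 with hT₀_def
  have ht₁0 : 0 < t₁ := lt_of_lt_of_le ht₀ ht₁
  have hT₀t₁ : t₁ ≤ T₀ := le_max_left _ _
  have hT₀1 : (1:ℝ) ≤ T₀ := le_max_right _ _
  have hT₀0 : (0:ℝ) < T₀ := lt_of_lt_of_le one_pos hT₀1
  -- pointwise positivity
  have hf'pos : ∀ t, 0 < t → 0 < deriv f t := fun t ht => lt_of_lt_of_le one_pos (hf'_ge t ht)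
  have hg_nonneg : ∀ t, t₀ ≤ t → 0 ≤ g t := by
    intro t ht
    have htpos : 0 < t := lt_of_lt_of_le ht₀ ht
    exact div_nonneg (mul_nonneg (ha_pos t ht).le (hf_pos t htpos).le) (hf'pos t htpos).le
  -- explicit derivative of g
  set G' : ℝ → ℝ := fun t =>
    ((deriv a t * f t + a t * deriv f t) * deriv f t - a t * f t * ((a t)^2 * f t)) / (deriv f t)^2
    with hG'_def
  have hgderiv : ∀ t, 0 < t → HasDerivAt g (G' t) t := by
    intro t ht
    have h1 : HasDerivAt (fun y => a y * f y) (deriv a t * f t + a t * deriv f t) t :=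
      ((had t).hasDerivAt).mul ((hfd t).hasDerivAt)
    have h2 : HasDerivAt (deriv f) ((a t)^2 * f t) t := by
      have := (hf'd t).hasDerivAt
      rwa [hjacobi t ht.le] at this
    exact h1.div h2 (ne_of_gt (hf'pos t ht))
  have hg_diffAt : ∀ t, 0 < t → DifferentiableAt ℝ g t :=
    fun t ht => (hgderiv t ht).differentiableAt
  have hg_deriv_eq : ∀ t, 0 < t → deriv g t = G' t :=
    fun t ht => (hgderiv t ht).deriv
  -- continuity of g and G' on Ici T₀
  have hgcont : ContinuousOn g (Ici T₀) :=
    fun t ht => ((hg_diffAt t (lt_of_lt_of_le hT₀0 ht)).continuousAt).continuousWithinAt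
  have hG'cont : ContinuousOn G' (Ici T₀) := by
    apply ContinuousOn.div
    · exact ((((ha'c.mul hfc).add (hac.mul hf'cc)).mul hf'cc).sub
        ((hac.mul hfc).mul (((hac.pow 2)).mul hfc))).continuousOn
    · exact (hf'cc.pow 2).continuousOn
    · intro t ht
      exact pow_ne_zero _ (ne_of_gt (hf'pos t (lt_of_lt_of_le hT₀0 ht)))
  -- key Riccati inequality
  have ht₀T₀ : t₀ ≤ T₀ := le_trans ht₁ hT₀t₁
  have hkey : ∀ t, T₀ ≤ t → G' t ≤ a t * (1 - c * g t - (g t)^2) := by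
    intro t ht
    have htpos : 0 < t := lt_of_lt_of_le hT₀0 ht
    have hd0 : 0 < deriv f t := hf'pos t htpos
    have hfnn : 0 ≤ f t := (hf_pos t htpos).le
    have hat : 0 < a t := ha_pos t (le_trans ht₀T₀ ht)
    have ha' : deriv a t ≤ -c * (a t)^2 := hdecay t (le_trans hT₀t₁ ht)
    have e1 : G' t = a t + deriv a t * f t / deriv f t - a t * (g t)^2 := by
      simp only [hG'_def, hg_def]
      field_simp
      ring
    have h5 : deriv a t * f t ≤ -c * (a t)^2 * f t := mul_le_mul_of_nonneg_right ha' hfnn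
    have hm : 0 ≤ f t / deriv f t := div_nonneg hfnn hd0.le
    have e2 : deriv a t * f t / deriv f t ≤ -c * (a t * g t) := by
      have h6 : deriv a t * (f t / deriv f t) ≤ (-c * (a t)^2) * (f t / deriv f t) :=
        mul_le_mul_of_nonneg_right ha' hm
      calc deriv a t * f t / deriv f t = deriv a t * (f t / deriv f t) := by ring
        _ ≤ (-c * (a t)^2) * (f t / deriv f t) := h6
        _ = -c * (a t * g t) := by simp only [hg_def]; ring
    have e3 : a t * (1 - c * g t - (g t)^2) = a t + (-c * (a t * g t)) - a t * (g t)^2 := by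
      ring
    linarith
  -- consequence when g is above the barrier
  have hkey2 : ∀ ε, 0 < ε → ∀ t, T₀ ≤ t → 1/k + ε ≤ g t → G' t ≤ -(ε * k) * a t := by
    intro ε hε t ht hgt
    have h1 := hkey t ht
    have hat : 0 ≤ a t := ha_nonneg t (lt_of_lt_of_le hT₀0 ht).le
    have hkinv : 0 < 1/k := by positivity
    have hid : 1 - c * g t - (g t)^2 = -((g t - 1/k) * (g t + k)) := by
      rw [hkc]
      field_simp
      ring
    have h2 : ε ≤ g t - 1/k := by linarith
    have h3 : k ≤ g t + k := by linarith
    have h4 : ε * k ≤ (g t - 1/k) * (g t + k) :=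
      mul_le_mul h2 h3 hk0.le (by linarith)
    have h5 : 1 - c * g t - (g t)^2 ≤ -(ε * k) := by rw [hid]; linarith
    have h6 : a t * (1 - c * g t - (g t)^2) ≤ a t * (-(ε * k)) :=
      mul_le_mul_of_nonneg_left h5 hat
    have h7 : a t * (-(ε * k)) = -(ε * k) * a t := by ring
    linarith
  have hkey3 : ∀ ε, 0 < ε → ∀ t, T₀ ≤ t → 1/k + ε ≤ g t → deriv g t ≤ 0 := by
    intro ε hε t ht hgt
    rw [hg_deriv_eq t (lt_of_lt_of_le hT₀0 ht)]
    have h1 := hkey2 ε hε t ht hgt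
    have h2 : -(ε * k) * a t ≤ 0 := by
      have h3 := ha_nonneg t (le_trans hT₀0.le ht)
      have h4 : 0 ≤ ε * k * a t := by positivity
      linarith
    linarith
  -- Case (b) is contradictory
  have hcaseb : ¬ (MeasureTheory.IntegrableOn a (Set.Ici 0) ∧
      Tendsto (fun t => deriv f t) atTop atTop) := by
    rintro ⟨hint, htend⟩
    -- f' is monotone on [0,∞)
    have hf'mono : MonotoneOn (deriv f) (Ici 0) := by
      apply monotoneOn_of_deriv_nonneg (convex_Ici 0) hf'cc.continuousOn
        (hf'd.differentiableOn)
      intro x hx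
      rw [interior_Ici] at hx
      rw [hjacobi x (le_of_lt hx)]
      exact mul_nonneg (sq_nonneg _) (hf_pos x hx).le
    -- f t ≤ t f'(t)
    have hflin : ∀ t, 0 < t → f t ≤ t * deriv f t := by
      intro t ht
      obtain ⟨ξ, hξ, hslope⟩ := exists_deriv_eq_slope f ht hfc.continuousOn
        hfd.differentiableOn
      rw [hf0, sub_zero, sub_zero] at hslope
      have hmono : deriv f ξ ≤ deriv f t := hf'mono (le_of_lt hξ.1) (le_of_lt (lt_trans hξ.1 hξ.2)) hξ.2.le
      rw [hslope] at hmono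
      have := (div_le_iff₀ ht).mp hmono
      linarith
    -- growth of 1/a
    have hinv : ∀ t, t₁ ≤ t → c * (t - t₁) ≤ (a t)⁻¹ := by
      have hmono : MonotoneOn (fun x => (a x)⁻¹ - c * x) (Ici t₁) := by
        apply monotoneOn_of_deriv_nonneg (convex_Ici t₁)
        · apply ContinuousOn.sub
          · exact ContinuousOn.inv₀ hac.continuousOn
              (fun x hx => (ha_pos x (le_trans ht₁ hx)).ne')
          · fun_prop
        · intro x hx
          rw [interior_Ici] at hx
          have hax : 0 < a x := ha_pos x (le_trans ht₁ hx.le)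
          have h1 : HasDerivAt (fun y => (a y)⁻¹ - c * y)
              (-(deriv a x) / (a x)^2 - c * 1) x :=
            (((had x).hasDerivAt).inv hax.ne').sub ((hasDerivAt_id x).const_mul c)
          exact h1.differentiableAt.differentiableWithinAt
        · intro x hx
          rw [interior_Ici] at hx
          have hax : 0 < a x := ha_pos x (le_trans ht₁ hx.le)
          have h1 : HasDerivAt (fun y => (a y)⁻¹ - c * y)
              (-(deriv a x) / (a x)^2 - c * 1) x :=
            (((had x).hasDerivAt).inv hax.ne').sub ((hasDerivAt_id x).const_mul c)
          rw [h1.deriv]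
          have h2 : deriv a x ≤ -c * (a x)^2 := hdecay x hx.le
          have h3 : c * (a x)^2 ≤ -(deriv a x) := by linarith
          have h4 : c ≤ -(deriv a x) / (a x)^2 := by
            rw [le_div_iff₀ (by positivity)]
            linarith
          linarith
      intro t ht
      have h1 := hmono self_mem_Ici (mem_Ici.mpr ht) ht
      have h2 : 0 < (a t₁)⁻¹ := by
        have := ha_pos t₁ ht₁
        positivity
      simp only at h1
      linarith
    -- a t * t ≤ 2/c
    have hat_bound : ∀ t, 2*t₁ ≤ t → a t * t ≤ 2/c := by
      intro t ht
      have ht₁t : t₁ ≤ t := by linarith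
      have h1 := hinv t ht₁t
      have hat : 0 < a t := ha_pos t (le_trans ht₁ ht₁t)
      have ht0 : 0 < t := by linarith
      have h3 : c * (t/2) ≤ (a t)⁻¹ := by nlinarith
      have h4 : a t * (c * (t/2)) ≤ a t * (a t)⁻¹ := mul_le_mul_of_nonneg_left h3 hat.le
      rw [mul_inv_cancel₀ hat.ne'] at h4
      rw [le_div_iff₀ hc]
      nlinarith
    -- bound on g
    set T : ℝ := max T₀ (2*t₁) with hT_def
    have hTT₀ : T₀ ≤ T := le_max_left _ _
    have hTpos : 0 < T := lt_of_lt_of_le hT₀0 hTT₀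
    have hgM : ∀ t, T ≤ t → g t ≤ 2/c := by
      intro t ht
      have htpos : 0 < t := lt_of_lt_of_le hTpos ht
      have h1 : f t ≤ t * deriv f t := hflin t htpos
      have h2 : a t * t ≤ 2/c := hat_bound t (le_trans (le_max_right _ _) ht)
      have hd : 0 < deriv f t := hf'pos t htpos
      have hatn : 0 ≤ a t := ha_nonneg t htpos.le
      have h3 : g t ≤ a t * t := by
        simp only [hg_def]
        rw [div_le_iff₀ hd]
        calc a t * f t ≤ a t * (t * deriv f t) := mul_le_mul_of_nonneg_left h1 hatn
          _ = a t * t * deriv f t := by ring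
      linarith
    -- integral of a beyond T
    have hintIoi : IntegrableOn a (Ioi T) :=
      hint.mono_set (fun x hx => le_of_lt (lt_of_le_of_lt hTpos.le hx))
    set C : ℝ := ∫ x in Ioi T, a x with hC_def
    -- log f' is bounded
    have hlog : ∀ t, T ≤ t → Real.log (deriv f t) ≤ Real.log (deriv f T) + (2/c) * C := by
      intro t ht
      have hder : ∀ x ∈ uIcc T t, HasDerivAt (fun y => Real.log (deriv f y))
          ((a x)^2 * f x / deriv f x) x := by
        intro x hx
        rw [uIcc_of_le ht] at hx
        have hx0 : 0 < x := lt_of_lt_of_le hTpos hx.1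
        have h := ((hf'd x).hasDerivAt).log (hf'pos x hx0).ne'
        rwa [hjacobi x hx0.le] at h
      set H : ℝ → ℝ := fun x => (a x)^2 * f x / deriv f x with hH_def
      have hHcont : ContinuousOn H (Icc T t) := by
        apply ContinuousOn.div ((hac.pow 2).mul hfc).continuousOn hf'cc.continuousOn
        intro x hx
        exact (hf'pos x (lt_of_lt_of_le hTpos hx.1)).ne'
      have hHint : IntervalIntegrable H MeasureTheory.volume T t := by
        apply ContinuousOn.intervalIntegrable
        rwa [uIcc_of_le ht]
      have hftc : ∫ x in T..t, H x = Real.log (deriv f t) - Real.log (deriv f T) :=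
        intervalIntegral.integral_eq_sub_of_hasDerivAt hder hHint
      have hptwise : ∀ x ∈ Icc T t, H x ≤ (2/c) * a x := by
        intro x hx
        have hx0 : 0 < x := lt_of_lt_of_le hTpos hx.1
        have hgx := hgM x hx.1
        have hEq : H x = a x * g x := by
          simp only [hH_def, hg_def]
          ring
        rw [hEq]
        have h1 := mul_le_mul_of_nonneg_left hgx (ha_nonneg x hx0.le)
        linarith
      have hmono2 : ∫ x in T..t, H x ≤ ∫ x in T..t, (2/c) * a x :=
        intervalIntegral.integral_mono_on ht hHint
          ((continuous_const.mul hac).intervalIntegrable T t) hptwise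
      have hconst : ∫ x in T..t, (2/c) * a x = (2/c) * ∫ x in T..t, a x :=
        intervalIntegral.integral_const_mul _ _
      have hle : ∫ x in T..t, a x ≤ C := by
        rw [intervalIntegral.integral_of_le ht]
        apply setIntegral_mono_set hintIoi
        · refine (MeasureTheory.ae_restrict_iff' measurableSet_Ioi).mpr
            (MeasureTheory.ae_of_all _ ?_)
          intro x hx
          simpa using ha_nonneg x (le_of_lt (lt_of_le_of_lt hTpos.le hx))
        · exact HasSubset.Subset.eventuallyLE Ioc_subset_Ioi_self
      have h2c : (0:ℝ) ≤ 2/c := by positivity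
      have h7 := mul_le_mul_of_nonneg_left hle h2c
      linarith
    -- contradiction
    set B : ℝ := Real.exp (Real.log (deriv f T) + (2/c) * C) with hB_def
    have hbd : ∀ t, T ≤ t → deriv f t ≤ B := by
      intro t ht
      have hd : 0 < deriv f t := hf'pos t (lt_of_lt_of_le hTpos ht)
      rw [← Real.exp_log hd]
      exact Real.exp_le_exp.mpr (hlog t ht)
    obtain ⟨t, h1, h2⟩ := ((htend.eventually (eventually_ge_atTop (B+1))).and
      (eventually_ge_atTop T)).exists
    linarith [hbd t h2]
  have hna : ¬ MeasureTheory.IntegrableOn a (Set.Ici 0) := by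
    rcases halt with h | h
    · exact h
    · exact absurd h hcaseb
  -- Part A: reach below the barrier
  have hreach : ∀ ε, 0 < ε → ∀ T, T₀ ≤ T → ∃ t, T ≤ t ∧ g t ≤ 1/k + ε := by
    intro ε hε T hT
    by_contra hno
    push_neg at hno
    have hbnd : ∀ x, T ≤ x → G' x ≤ -(ε*k) * a x :=
      fun x hx => hkey2 ε hε x (le_trans hT hx) (hno x hx).le
    have hTpos : 0 < T := lt_of_lt_of_le hT₀0 hT
    have hint2 : ∀ t, T ≤ t → ε * k * (∫ x in T..t, a x) ≤ g T := by
      intro t htt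
      have hsub : Icc T t ⊆ Ici T₀ := fun x hx => le_trans hT hx.1
      have hG'int : IntervalIntegrable G' MeasureTheory.volume T t := by
        apply ContinuousOn.intervalIntegrable
        rw [uIcc_of_le htt]
        exact hG'cont.mono hsub
      have hftc : ∫ x in T..t, G' x = g t - g T := by
        apply intervalIntegral.integral_eq_sub_of_hasDerivAt
        · intro x hx
          rw [uIcc_of_le htt] at hx
          exact hgderiv x (lt_of_lt_of_le hT₀0 (le_trans hT hx.1))
        · exact hG'int
      have haint : IntervalIntegrable (fun x => -(ε*k) * a x) MeasureTheory.volume T t :=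
        (continuous_const.mul hac).intervalIntegrable T t
      have hmono2 : ∫ x in T..t, G' x ≤ ∫ x in T..t, -(ε*k) * a x :=
        intervalIntegral.integral_mono_on htt hG'int haint (fun x hx => hbnd x hx.1)
      have hconst : ∫ x in T..t, -(ε*k) * a x = -(ε*k) * ∫ x in T..t, a x :=
        intervalIntegral.integral_const_mul _ _
      have hgt0 : 0 ≤ g t := hg_nonneg t (le_trans ht₀T₀ (le_trans hT htt))
      have := hftc ▸ hmono2
      rw [hconst] at this
      linarith
    have hCov : ∀ t, T ≤ t → ∫ x in T..t, ‖a x‖ ≤ g T / (ε*k) := by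
      intro t htt
      have hnorm : ∫ x in T..t, ‖a x‖ = ∫ x in T..t, a x := by
        apply intervalIntegral.integral_congr
        intro x hx
        rw [uIcc_of_le htt] at hx
        exact Real.norm_of_nonneg (ha_nonneg x (le_trans (le_trans hTpos.le hx.1) le_rfl))
      rw [hnorm, le_div_iff₀ (mul_pos hε hk0)]
      nlinarith [hint2 t htt]
    have hIoi : IntegrableOn a (Ioi T) := by
      apply MeasureTheory.integrableOn_Ioi_of_intervalIntegral_norm_bounded
        (g T / (ε*k)) T (fun i : ℝ => hac.integrableOn_Ioc) tendsto_id
      filter_upwards [eventually_ge_atTop T] with i hi using hCov i hi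
    apply hna
    have h1 : IntegrableOn a (Icc 0 T) := hac.integrableOn_Icc
    have h2 : IntegrableOn a (Icc 0 T ∪ Ioi T) := h1.union hIoi
    apply h2.mono_set
    intro x hx
    by_cases hxT : x ≤ T
    · exact Or.inl ⟨hx, hxT⟩
    · exact Or.inr (not_le.mp hxT)
  -- Part B: eventual bound
  have hev : ∀ ε, 0 < ε → ∀ᶠ t in atTop, g t ≤ 1/k + ε := by
    intro ε hε
    obtain ⟨t₂, ht₂, hgt₂⟩ := hreach ε hε T₀ le_rfl
    rw [eventually_atTop]
    refine ⟨t₂, ?_⟩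
    exact jacobi_aux_barrier ht₂ hgcont
      (fun x hx => hg_diffAt x (lt_trans hT₀0 hx))
      (fun x hx hLx => hkey3 ε hε x hx hLx) hgt₂
  -- conclusion
  have hcob : IsCoboundedUnder (· ≤ ·) atTop g := by
    apply isCoboundedUnder_le_of_eventually_le (x := 0) atTop
    filter_upwards [eventually_ge_atTop t₀] with t ht
    exact hg_nonneg t ht
  have hlim : ∀ ε, 0 < ε → limsup g atTop ≤ 1/k + ε :=
    fun ε hε => limsup_le_of_le hcob (hev ε hε)
  refine le_of_forall_sub_le ?_
  intro ε hε
  have := hlim ε hε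
  linarith

end
end

section
/- Let a : [0,∞) → [0,∞) be a smooth function such that a(t) > 0 for every t ≥ t₀ (for some t₀ > 0), and suppose that lim_{t→∞} a'(t)/a(t)² = 0. Then (f_a/f_a')'(t) → 0 as t → ∞; moreover, if in addition a(t) → ∞ as t → ∞ then f_a'(t)/f_a(t) → ∞, while if a(t) → 0 as t → ∞ then f_a(t)/f_a'(t) → ∞. -/
open Filter Set

lemma barrier_upper (h : ℝ → ℝ) (s c : ℝ)
    (hcont : ContinuousOn h (Ici s))
    (hdiff : ∀ x ∈ Ioi s, DifferentiableAt ℝ h x)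
    (hs : h s ≤ c)
    (hder : ∀ x ∈ Ioi s, c ≤ h x → deriv h x ≤ 0) :
    ∀ t, s ≤ t → h t ≤ c := by
  intro t hst
  by_contra hlt
  push_neg at hlt
  have hst' : s < t := by
    rcases eq_or_lt_of_le hst with rfl | h'
    · linarith
    · exact h'
  set K : Set ℝ := Icc s t ∩ h ⁻¹' Iic c with hK
  have hKclosed : IsClosed K :=
    ContinuousOn.preimage_isClosed_of_isClosed (hcont.mono Icc_subset_Ici_self)
      isClosed_Icc isClosed_Iic
  have hKcompact : IsCompact K :=
    (isCompact_Icc (a := s) (b := t)).of_isClosed_subset hKclosed inter_subset_left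
  have hKne : K.Nonempty := ⟨s, ⟨le_refl s, hst⟩, hs⟩
  set u := sSup K with hu
  have huK : u ∈ K := hKcompact.sSup_mem hKne
  obtain ⟨⟨hsu, hut⟩, huc⟩ := huK
  have hut' : u < t := by
    rcases eq_or_lt_of_le hut with h' | h'
    · have huc2 : h u ≤ c := huc
      rw [h'] at huc2; linarith
    · exact h'
  have hgt : ∀ x ∈ Ioc u t, c < h x := by
    intro x hx
    obtain ⟨hux, hxt⟩ := hx
    by_contra hxc
    push_neg at hxc
    have : x ≤ u := le_csSup hKcompact.bddAbove ⟨⟨hsu.trans hux.le, hxt⟩, hxc⟩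
    linarith
  have hanti : AntitoneOn h (Icc u t) := by
    apply antitoneOn_of_deriv_nonpos (convex_Icc u t)
    · exact hcont.mono (Icc_subset_Ici_self.trans (Ici_subset_Ici.mpr hsu))
    · intro x hx
      rw [interior_Icc] at hx
      exact (hdiff x (lt_of_le_of_lt hsu hx.1)).differentiableWithinAt
    · intro x hx
      rw [interior_Icc] at hx
      exact hder x (lt_of_le_of_lt hsu hx.1) (hgt x ⟨hx.1, hx.2.le⟩).le
  have h1 := hanti ⟨le_refl u, hut⟩ ⟨hut, le_refl t⟩ hut
  have h2 : h u ≤ c := huc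
  linarith

lemma barrier_lower (h : ℝ → ℝ) (s c : ℝ)
    (hcont : ContinuousOn h (Ici s))
    (hdiff : ∀ x ∈ Ioi s, DifferentiableAt ℝ h x)
    (hs : c ≤ h s)
    (hder : ∀ x ∈ Ioi s, h x ≤ c → 0 ≤ deriv h x) :
    ∀ t, s ≤ t → c ≤ h t := by
  have := barrier_upper (fun x => -h x) s (-c) hcont.neg
    (fun x hx => (hdiff x hx).neg) (by simpa using hs)
    (fun x hx hcx => by
      rw [deriv.fun_neg]
      simp only [neg_le_neg_iff] at hcx
      simpa using hder x hx hcx)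
  intro t ht
  have := this t ht
  simpa using this

set_option maxHeartbeats 1000000 in
/-- Let `a : [0,∞) → [0,∞)` be smooth with `a(t) > 0` for `t ≥ t₀`,
and suppose `a'(t)/a(t)² → 0` as `t → ∞`.  Let `f` be the Jacobi solution with
`f 0 = 0`, `f' 0 = 1`, `f'' = a² f` (hence `f > 0`, `f' ≥ 1` on `(0,∞)`).
Then `(f/f')'(t) → 0`; moreover, if `a(t) → ∞` then `f'(t)/f(t) → ∞`, while if
`a(t) → 0` then `f(t)/f'(t) → ∞`. -/
theorem jacobi_ratio_deriv_tendsto_zero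
    (a f : ℝ → ℝ)
    (ha_smooth : ContDiff ℝ (⊤ : ℕ∞) a)
    (ha_nonneg : ∀ t, 0 ≤ t → 0 ≤ a t)
    (t₀ : ℝ) (ht₀ : 0 < t₀)
    (ha_pos : ∀ t, t₀ ≤ t → 0 < a t)
    (hf_smooth : ContDiff ℝ (⊤ : ℕ∞) f)
    (hf0 : f 0 = 0) (hf'0 : deriv f 0 = 1)
    (hjacobi : ∀ t, 0 ≤ t → deriv (deriv f) t = (a t)^2 * f t)
    (hf_pos : ∀ t, 0 < t → 0 < f t)
    (hf'_ge : ∀ t, 0 < t → 1 ≤ deriv f t)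
    (hlim : Tendsto (fun t => deriv a t / (a t)^2) atTop (nhds 0)) :
    Tendsto (deriv (fun t => f t / deriv f t)) atTop (nhds 0) ∧
    (Tendsto a atTop atTop →
      Tendsto (fun t => deriv f t / f t) atTop atTop) ∧
    (Tendsto a atTop (nhds 0) →
      Tendsto (fun t => f t / deriv f t) atTop atTop) := by
  have hfd : Differentiable ℝ f := hf_smooth.differentiable (by simp)
  have hfd' : Differentiable ℝ (deriv f) := by
    have h0 : ContDiff ℝ (⊤:ℕ∞) f := hf_smooth.of_le (by simp)
    have h1 := h0.iterate_deriv 1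
    simp only [Function.iterate_one] at h1
    exact h1.differentiable (by simp)
  have had : Differentiable ℝ a := ha_smooth.differentiable (by simp)
  set g : ℝ → ℝ := fun t => f t / deriv f t with hg
  set H : ℝ → ℝ := fun t => a t * g t with hHdef
  have hf'pos : ∀ t, 0 < t → 0 < deriv f t := fun t ht => lt_of_lt_of_le one_pos (hf'_ge t ht)
  have hgpos : ∀ t, 0 < t → 0 < g t := fun t ht => div_pos (hf_pos t ht) (hf'pos t ht)
  have hg_deriv : ∀ t, 0 < t → HasDerivAt g (1 - (a t)^2 * (g t)^2) t := by
    intro t ht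
    have h1 : HasDerivAt f (deriv f t) t := (hfd t).hasDerivAt
    have h2 : HasDerivAt (deriv f) ((a t)^2 * f t) t := by
      have := (hfd' t).hasDerivAt
      rwa [hjacobi t ht.le] at this
    have hne : deriv f t ≠ 0 := ne_of_gt (hf'pos t ht)
    have h3 := h1.div h2 hne
    refine h3.congr_deriv ?_
    simp only [g]
    field_simp
  have hH_deriv : ∀ t, (0:ℝ) < t →
      HasDerivAt H (deriv a t * g t + a t * (1 - (a t)^2 * (g t)^2)) t :=
    fun t ht => ((had t).hasDerivAt).mul (hg_deriv t ht)
  -- main limit : H → 1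
  have hmain : Tendsto H atTop (nhds 1) := by
    have key : ∀ ε : ℝ, 0 < ε → ε ≤ 1 → ∃ s, ∀ t, s ≤ t → |H t - 1| ≤ ε := by
      intro ε hε hε1
      have hev := Metric.tendsto_nhds.mp hlim (ε/2) (by positivity)
      rw [eventually_atTop] at hev
      obtain ⟨T₁, hT₁⟩ := hev
      set T := max T₁ (max t₀ 1) with hTdef
      have hTt₀ : t₀ ≤ T := le_trans (le_max_left _ _) (le_max_right _ _)
      have hT1 : (1:ℝ) ≤ T := le_trans (le_max_right _ _) (le_max_right _ _)
      have haT : ∀ t, T ≤ t → 0 < a t := fun t ht => ha_pos t (le_trans hTt₀ ht)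
      have hTpos' : ∀ t, T ≤ t → (0:ℝ) < t := fun t ht => lt_of_lt_of_le one_pos (hT1.trans ht)
      have hr : ∀ t, T ≤ t → |deriv a t| ≤ ε/2 * (a t)^2 := by
        intro t ht
        have h1 := hT₁ t (le_trans (le_max_left _ _) ht)
        rw [Real.dist_eq, sub_zero, abs_div] at h1
        have ha2 : (0:ℝ) < (a t)^2 := pow_pos (haT t ht) 2
        have ha2' : |(a t)^2| = (a t)^2 := abs_of_pos ha2
        rw [ha2', div_lt_iff₀ ha2] at h1
        linarith
      set C := (a T)⁻¹ with hCdef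
      have hC : 0 < C := inv_pos.mpr (haT T le_rfl)
      have hCx : ∀ x, T ≤ x → 0 < C + (x - T) := fun x hx => by
        have : (0:ℝ) ≤ x - T := by linarith
        linarith
      -- lower bound for a
      have hq_deriv : ∀ x, T ≤ x →
          HasDerivAt (fun t => C + (t - T) - (a t)⁻¹) (1 - (-(deriv a x) / (a x)^2)) x := by
        intro x hx
        have h1 : HasDerivAt (fun t : ℝ => C + (t - T)) 1 x := by
          simpa using ((hasDerivAt_id x).sub_const T).const_add C
        exact h1.sub (((had x).hasDerivAt).inv (ne_of_gt (haT x hx)))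
      have haLB : ∀ t, T ≤ t → (C + (t - T))⁻¹ ≤ a t := by
        have hmono : MonotoneOn (fun t => C + (t - T) - (a t)⁻¹) (Set.Ici T) := by
          apply monotoneOn_of_deriv_nonneg (convex_Ici T)
          · intro x hx
            exact (hq_deriv x hx).continuousAt.continuousWithinAt
          · intro x hx
            rw [interior_Ici] at hx
            exact (hq_deriv x hx.le).differentiableAt.differentiableWithinAt
          · intro x hx
            rw [interior_Ici] at hx
            rw [(hq_deriv x hx.le).deriv]
            have habs := hr x hx.le
            have ha2 : (0:ℝ) < (a x)^2 := pow_pos (haT x hx.le) 2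
            have h2 : -(1:ℝ) ≤ deriv a x / (a x)^2 := by
              rw [le_div_iff₀ ha2]
              have := (abs_le.mp habs).1
              nlinarith
            have h3 : -(deriv a x) / (a x)^2 = -(deriv a x / (a x)^2) := by ring
            rw [h3]
            linarith
        intro t ht
        have h1 := hmono (Set.self_mem_Ici) (Set.mem_Ici.mpr ht) ht
        simp only [sub_self, add_zero] at h1
        have h2 : (a t)⁻¹ ≤ C + (t - T) := by linarith
        have h3 : 0 < (a t)⁻¹ := inv_pos.mpr (haT t ht)
        calc (C + (t - T))⁻¹ ≤ ((a t)⁻¹)⁻¹ := inv_anti₀ h3 h2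
          _ = a t := inv_inv _
      have hH0 : ∀ t, T ≤ t → 0 ≤ H t :=
        fun t ht => (mul_pos (haT t ht) (hgpos t (hTpos' t ht))).le
      -- region derivative bounds
      have hlow : ∀ t, T ≤ t → H t ≤ 1 - ε → ε/2 * a t ≤ deriv H t := by
        intro t ht hHt
        rw [(hH_deriv t (hTpos' t ht)).deriv]
        have hA := haT t ht
        have hG := hgpos t (hTpos' t ht)
        have habs := (abs_le.mp (hr t ht)).1
        have hH0' := hH0 t ht
        simp only [hHdef] at hHt hH0'
        have h5 : (-(ε/2 * (a t)^2)) * g t ≤ deriv a t * g t :=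
          mul_le_mul_of_nonneg_right (by linarith) hG.le
        have hfac : ε/2 ≤ 1 - (a t * g t)^2 - ε/2 * (a t * g t) := by nlinarith
        nlinarith [mul_le_mul_of_nonneg_left hfac hA.le]
      have hup : ∀ t, T ≤ t → 1 + ε ≤ H t → deriv H t ≤ -(ε/2 * a t) := by
        intro t ht hHt
        rw [(hH_deriv t (hTpos' t ht)).deriv]
        have hA := haT t ht
        have hG := hgpos t (hTpos' t ht)
        have habs := (abs_le.mp (hr t ht)).2
        simp only [hHdef] at hHt
        have h5 : deriv a t * g t ≤ (ε/2 * (a t)^2) * g t :=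
          mul_le_mul_of_nonneg_right habs hG.le
        have hx0 : 0 ≤ a t * g t := (mul_pos hA hG).le
        have hfac : 1 - (a t * g t)^2 + ε/2 * (a t * g t) ≤ -(ε/2) := by
          nlinarith [mul_nonneg (by linarith : (0:ℝ) ≤ a t * g t - (1+ε))
            (by linarith : (0:ℝ) ≤ a t * g t + 1 + ε/2)]
        nlinarith [mul_le_mul_of_nonneg_left hfac hA.le]
      -- log derivative helper
      have hlog_deriv : ∀ x, T ≤ x →
          HasDerivAt (fun t => Real.log (C + (t - T))) ((C + (x - T))⁻¹) x := by
        intro x hx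
        have h1 : HasDerivAt (fun t : ℝ => C + (t - T)) 1 x := by
          simpa using ((hasDerivAt_id x).sub_const T).const_add C
        have h2 := h1.log (ne_of_gt (hCx x hx))
        simpa [one_div] using h2
      -- crossing 1 : enters region H ≤ 1+ε
      have hcross1 : ∃ s₁, T ≤ s₁ ∧ H s₁ ≤ 1 + ε := by
        by_contra hcon
        push_neg at hcon
        set ψ := fun t => H t + ε/2 * Real.log (C + (t - T)) with hψdef
        have hψd : ∀ x, T ≤ x →
            HasDerivAt ψ (deriv H x + ε/2 * (C + (x - T))⁻¹) x := by
          intro x hx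
          exact ((hH_deriv x (hTpos' x hx)).differentiableAt.hasDerivAt).add
            ((hlog_deriv x hx).const_mul (ε/2))
        have hanti : AntitoneOn ψ (Set.Ici T) := by
          apply antitoneOn_of_deriv_nonpos (convex_Ici T)
          · exact fun x hx => (hψd x hx).continuousAt.continuousWithinAt
          · intro x hx
            rw [interior_Ici] at hx
            exact (hψd x hx.le).differentiableAt.differentiableWithinAt
          · intro x hx
            rw [interior_Ici] at hx
            rw [(hψd x hx.le).deriv]
            have h1 := hup x hx.le (hcon x hx.le).le
            have h2 : ε/2 * (C + (x - T))⁻¹ ≤ ε/2 * a x :=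
              mul_le_mul_of_nonneg_left (haLB x hx.le) (by positivity)
            linarith
        set E := Real.log C + 2/ε * H T + 1 with hEdef
        set t₁ := T + Real.exp E with ht₁def
        have ht₁T : T ≤ t₁ := by
          have := Real.exp_pos E
          linarith
        have hψle := hanti Set.self_mem_Ici (Set.mem_Ici.mpr ht₁T) ht₁T
        simp only [hψdef] at hψle
        have hlog1 : E ≤ Real.log (C + (t₁ - T)) := by
          have h1 : Real.exp E ≤ C + (t₁ - T) := by
            simp only [ht₁def]
            have : T + Real.exp E - T = Real.exp E := by ring
            rw [this]
            linarith
          calc E = Real.log (Real.exp E) := (Real.log_exp E).symm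
            _ ≤ Real.log (C + (t₁ - T)) := Real.log_le_log (Real.exp_pos E) h1
        have hTT : C + (T - T) = C := by ring
        rw [hTT] at hψle
        have hexp : ε/2 * E = ε/2 * Real.log C + H T + ε/2 := by
          rw [hEdef]
          field_simp
        have hHt₁ := hcon t₁ ht₁T
        have hmul := mul_le_mul_of_nonneg_left hlog1 (le_of_lt (half_pos hε))
        linarith
      obtain ⟨s₁, hs₁T, hs₁⟩ := hcross1
      -- stays below 1+ε
      have hstay1 : ∀ t, s₁ ≤ t → H t ≤ 1 + ε := by
        apply barrier_upper H s₁ (1+ε)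
        · exact fun x hx =>
            (hH_deriv x (hTpos' x (hs₁T.trans hx))).continuousAt.continuousWithinAt
        · exact fun x hx => (hH_deriv x (hTpos' x (hs₁T.trans (le_of_lt hx)))).differentiableAt
        · exact hs₁
        · intro x hx hxc
          have h1 := hup x (hs₁T.trans (le_of_lt hx)) hxc
          have h2 : 0 < a x := haT x (hs₁T.trans (le_of_lt hx))
          have h3 : 0 ≤ ε/2 * a x := mul_nonneg (le_of_lt (half_pos hε)) h2.le
          linarith
      -- crossing 2 : enters region H ≥ 1-ε
      have hcross2 : ∃ s₂, s₁ ≤ s₂ ∧ 1 - ε ≤ H s₂ := by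
        by_contra hcon
        push_neg at hcon
        set φ := fun t => H t - ε/2 * Real.log (C + (t - T)) with hφdef
        have hφd : ∀ x, s₁ ≤ x →
            HasDerivAt φ (deriv H x - ε/2 * (C + (x - T))⁻¹) x := by
          intro x hx
          exact ((hH_deriv x (hTpos' x (hs₁T.trans hx))).differentiableAt.hasDerivAt).sub
            ((hlog_deriv x (hs₁T.trans hx)).const_mul (ε/2))
        have hmono : MonotoneOn φ (Set.Ici s₁) := by
          apply monotoneOn_of_deriv_nonneg (convex_Ici s₁)
          · exact fun x hx => (hφd x hx).continuousAt.continuousWithinAt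
          · intro x hx
            rw [interior_Ici] at hx
            exact (hφd x hx.le).differentiableAt.differentiableWithinAt
          · intro x hx
            rw [interior_Ici] at hx
            rw [(hφd x hx.le).deriv]
            have h1 := hlow x (hs₁T.trans hx.le) (hcon x hx.le).le
            have h2 : ε/2 * (C + (x - T))⁻¹ ≤ ε/2 * a x :=
              mul_le_mul_of_nonneg_left (haLB x (hs₁T.trans hx.le)) (by positivity)
            linarith
        set E := Real.log (C + (s₁ - T)) + 2/ε * 2 + 1 with hEdef
        set t₁ := s₁ + Real.exp E with ht₁def
        have ht₁s : s₁ ≤ t₁ := by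
          have := Real.exp_pos E
          linarith
        have hφle := hmono Set.self_mem_Ici (Set.mem_Ici.mpr ht₁s) ht₁s
        simp only [hφdef] at hφle
        have hlog1 : E ≤ Real.log (C + (t₁ - T)) := by
          have hCs : 0 < C + (s₁ - T) := hCx s₁ hs₁T
          have h1 : Real.exp E ≤ C + (t₁ - T) := by
            simp only [ht₁def]
            have : C + (s₁ + Real.exp E - T) = (C + (s₁ - T)) + Real.exp E := by ring
            rw [this]
            linarith
          calc E = Real.log (Real.exp E) := (Real.log_exp E).symm
            _ ≤ Real.log (C + (t₁ - T)) := Real.log_le_log (Real.exp_pos E) h1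
        have hexp : ε/2 * E = ε/2 * Real.log (C + (s₁ - T)) + 2 + ε/2 := by
          rw [hEdef]
          field_simp
        have hHt₁ := hcon t₁ ht₁s
        have hHs0 := hH0 s₁ hs₁T
        have hmul := mul_le_mul_of_nonneg_left hlog1 (le_of_lt (half_pos hε))
        linarith
      obtain ⟨s₂, hs₂s₁, hs₂⟩ := hcross2
      have hstay2 : ∀ t, s₂ ≤ t → 1 - ε ≤ H t := by
        apply barrier_lower H s₂ (1-ε)
        · exact fun x hx =>
            (hH_deriv x (hTpos' x (hs₁T.trans (hs₂s₁.trans hx)))).continuousAt.continuousWithinAt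
        · exact fun x hx =>
            (hH_deriv x (hTpos' x (hs₁T.trans (hs₂s₁.trans (le_of_lt hx))))).differentiableAt
        · exact hs₂
        · intro x hx hxc
          have hxT : T ≤ x := hs₁T.trans (hs₂s₁.trans (le_of_lt hx))
          have h1 := hlow x hxT hxc
          have h2 : 0 < a x := haT x hxT
          have h3 : 0 ≤ ε/2 * a x := mul_nonneg (le_of_lt (half_pos hε)) h2.le
          linarith
      refine ⟨s₂, fun t ht => ?_⟩
      rw [abs_le]
      constructor
      · have := hstay2 t ht
        linarith
      · have := hstay1 t (hs₂s₁.trans ht)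
        linarith
    rw [Metric.tendsto_nhds]
    intro δ hδ
    obtain ⟨s, hs⟩ := key (min (δ/2) 1) (lt_min (by positivity) one_pos) (min_le_right _ _)
    rw [eventually_atTop]
    refine ⟨s, fun t ht => ?_⟩
    rw [Real.dist_eq]
    have h1 := hs t ht
    have h2 : min (δ/2) 1 ≤ δ/2 := min_le_left _ _
    linarith
  refine ⟨?_, ?_, ?_⟩
  · -- deriv g → 0
    have hgd_eq : ∀ᶠ t in atTop, (1 : ℝ) - (H t)^2 = deriv g t := by
      filter_upwards [eventually_gt_atTop (0:ℝ)] with t ht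
      rw [(hg_deriv t ht).deriv]
      simp only [hHdef]
      ring
    have h2 : Tendsto (fun t => 1 - (H t)^2) atTop (nhds 0) := by
      have h3 := Tendsto.sub
        (tendsto_const_nhds : Tendsto (fun _ : ℝ => (1:ℝ)) atTop (nhds 1)) (hmain.pow 2)
      simpa using h3
    exact h2.congr' hgd_eq
  · intro hA
    have heq : ∀ᶠ t in atTop, a t * (H t)⁻¹ = deriv f t / f t := by
      filter_upwards [eventually_ge_atTop (max t₀ 1)] with t ht
      have ht0 : (0:ℝ) < t := lt_of_lt_of_le one_pos (le_trans (le_max_right _ _) ht)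
      have hat : 0 < a t := ha_pos t (le_trans (le_max_left _ _) ht)
      have hft : 0 < f t := hf_pos t ht0
      have hf't : 0 < deriv f t := hf'pos t ht0
      simp only [hHdef, hg]
      field_simp
    have hHinv : Tendsto (fun t => (H t)⁻¹) atTop (nhds 1) := by
      have := hmain.inv₀ one_ne_zero
      simpa using this
    have h2 : Tendsto (fun t => a t * (H t)⁻¹) atTop atTop :=
      hA.atTop_mul_pos one_pos hHinv
    exact h2.congr' heq
  · intro hA0
    have heq : ∀ᶠ t in atTop, H t * (a t)⁻¹ = g t := by
      filter_upwards [eventually_ge_atTop (max t₀ 1)] with t ht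
      have hat : 0 < a t := ha_pos t (le_trans (le_max_left _ _) ht)
      simp only [hHdef]
      field_simp
    have hainv : Tendsto (fun t => (a t)⁻¹) atTop atTop := by
      have h1 : Tendsto a atTop (nhdsWithin 0 (Set.Ioi 0)) := by
        rw [tendsto_nhdsWithin_iff]
        refine ⟨hA0, ?_⟩
        filter_upwards [eventually_ge_atTop t₀] with t ht
        exact Set.mem_Ioi.mpr (ha_pos t ht)
      exact h1.inv_tendsto_nhdsGT_zero
    have h2 : Tendsto (fun t => H t * (a t)⁻¹) atTop atTop :=
      hmain.pos_mul_atTop one_pos hainv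
    exact h2.congr' heq
end

section
/- Let a : [0,∞) → [0,∞) be a smooth function such that a(t) > 0 for every t ≥ t₀ (for some t₀ > 0). Suppose there are constants c > 0 and t₁ ≥ t₀ such that a'(t) ≤ −c·a(t)² for all t ≥ t₁, and assume furthermore that either (a) ∫₀^∞ a(t) dt = ∞, or (b) ∫₀^∞ a(t) dt < ∞ and f_a'(t) → ∞ as t → ∞. Then lim_{t→∞} f_a(t)/f_a'(t) = ∞, and there exist constants C > 0 and T > 0 such that (f_a/f_a')'(t) ≥ C for all t ≥ T. -/
open Filter

/-- Monotonicity helper: if `φ` has derivative `φ'` on `[x,y]` with `φ' ≥ 0` on `(x,y)`,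
then `φ x ≤ φ y`. -/
private lemma jacobi_aux_mono_Icc {φ φ' : ℝ → ℝ} {x y : ℝ} (hxy : x ≤ y)
    (hder : ∀ t ∈ Set.Icc x y, HasDerivAt φ (φ' t) t)
    (hnn : ∀ t ∈ Set.Ioo x y, 0 ≤ φ' t) : φ x ≤ φ y := by
  have h := monotoneOn_of_deriv_nonneg (convex_Icc x y)
    (fun t ht => (hder t ht).continuousAt.continuousWithinAt)
    (fun t ht => by
      rw [interior_Icc] at ht
      exact (hder t (Set.Ioo_subset_Icc_self ht)).differentiableAt.differentiableWithinAt)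
    (fun t ht => by
      rw [interior_Icc] at ht
      rw [(hder t (Set.Ioo_subset_Icc_self ht)).deriv]
      exact hnn t ht)
  exact h (Set.left_mem_Icc.mpr hxy) (Set.right_mem_Icc.mpr hxy) hxy

set_option maxHeartbeats 1000000 in
/-- Let `a : [0,∞) → [0,∞)` be smooth with `a(t) > 0` for `t ≥ t₀`.
Suppose `a'(t) ≤ -c a(t)²` for all `t ≥ t₁ ≥ t₀` (with `c > 0`), and that either
(a) `∫₀^∞ a = ∞`, or (b) `∫₀^∞ a < ∞` and `f'(t) → ∞`, where `f` is the Jacobi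
solution with `f 0 = 0`, `f' 0 = 1`, `f'' = a² f` (hence `f > 0`, `f' ≥ 1` on `(0,∞)`).
Then `f(t)/f'(t) → ∞` and there are constants `C > 0`, `T > 0` with
`(f/f')'(t) ≥ C` for all `t ≥ T`. -/
theorem jacobi_ratio_tendsto_atTop_and_deriv_bounded_below
    (a f : ℝ → ℝ)
    (ha_smooth : ContDiff ℝ (⊤ : ℕ∞) a)
    (ha_nonneg : ∀ t, 0 ≤ t → 0 ≤ a t)
    (t₀ : ℝ) (ht₀ : 0 < t₀)
    (ha_pos : ∀ t, t₀ ≤ t → 0 < a t)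
    (hf_smooth : ContDiff ℝ (⊤ : ℕ∞) f)
    (hf0 : f 0 = 0) (hf'0 : deriv f 0 = 1)
    (hjacobi : ∀ t, 0 ≤ t → deriv (deriv f) t = (a t)^2 * f t)
    (hf_pos : ∀ t, 0 < t → 0 < f t)
    (hf'_ge : ∀ t, 0 < t → 1 ≤ deriv f t)
    (c t₁ : ℝ) (hc : 0 < c) (ht₁ : t₀ ≤ t₁)
    (hdecay : ∀ t, t₁ ≤ t → deriv a t ≤ -c * (a t)^2)
    (halt : (¬ MeasureTheory.IntegrableOn a (Set.Ici 0)) ∨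
      (MeasureTheory.IntegrableOn a (Set.Ici 0) ∧
        Tendsto (fun t => deriv f t) atTop atTop)) :
    Tendsto (fun t => f t / deriv f t) atTop atTop ∧
    ∃ C : ℝ, 0 < C ∧ ∃ T : ℝ, 0 < T ∧
      ∀ t, T ≤ t → C ≤ deriv (fun s => f s / deriv f s) t := by
  have ht₁0 : 0 < t₁ := lt_of_lt_of_le ht₀ ht₁
  have hfd : Differentiable ℝ f := hf_smooth.differentiable (by simp)
  have hf'smooth : ContDiff ℝ (⊤ : ℕ∞) (deriv f) := (contDiff_infty_iff_deriv.mp (hf_smooth.of_le (by simp))).2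
  have hf'd : Differentiable ℝ (deriv f) := hf'smooth.differentiable (by simp)
  have had : Differentiable ℝ a := ha_smooth.differentiable (by simp)
  have hacont : Continuous a := had.continuous
  have hf'pos : ∀ t, 0 ≤ t → 0 < deriv f t := by
    intro t ht
    rcases eq_or_lt_of_le ht with h | h
    · rw [← h, hf'0]; norm_num
    · linarith [hf'_ge t h]
  -- derivative of u = f/f'
  have hud : ∀ t, 0 ≤ t → HasDerivAt (fun s => f s / deriv f s)
      (1 - (a t)^2 * (f t / deriv f t)^2) t := by
    intro t ht
    have h0 : deriv f t ≠ 0 := (hf'pos t ht).ne'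
    have h := (hfd t).hasDerivAt.div ((hf'd t).hasDerivAt) h0
    refine h.congr_deriv ?_
    rw [hjacobi t ht]
    field_simp
  -- derivative of v = a * (f/f')
  have hvd : ∀ t, 0 ≤ t → HasDerivAt (fun s => a s * (f s / deriv f s))
      (deriv a t * (f t / deriv f t) + a t * (1 - (a t)^2 * (f t / deriv f t)^2)) t :=
    fun t ht => ((had t).hasDerivAt).mul (hud t ht)
  -- key differential inequality for v
  have hkey : ∀ x, t₁ ≤ x →
      deriv a x * (f x / deriv f x) + a x * (1 - (a x)^2 * (f x / deriv f x)^2) ≤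
        a x * (1 - c * (a x * (f x / deriv f x)) - (a x * (f x / deriv f x))^2) := by
    intro x hx
    have hxpos : 0 < x := lt_of_lt_of_le ht₁0 hx
    have hu0 : 0 ≤ f x / deriv f x := div_nonneg (hf_pos x hxpos).le (hf'pos x hxpos.le).le
    have h1 := mul_le_mul_of_nonneg_right (hdecay x hx) hu0
    nlinarith [h1]
  -- the constants
  have h1c : (0:ℝ) < 1 + c := by linarith
  set s : ℝ := 1 / Real.sqrt (1 + c) with hs_def
  have hsqrt_pos : 0 < Real.sqrt (1 + c) := Real.sqrt_pos.mpr h1c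
  have hsqrt_gt1 : 1 < Real.sqrt (1 + c) := by
    have := Real.lt_sqrt (x := 1) (y := 1 + c) (by norm_num)
    rw [this]; linarith
  have hsqrt_lt : Real.sqrt (1 + c) < 1 + c := by nlinarith [Real.sq_sqrt h1c.le]
  have hs_pos : 0 < s := by positivity
  have hs_lt1 : s < 1 := by
    rw [hs_def, div_lt_one hsqrt_pos]; exact hsqrt_gt1
  have hs2 : s^2 = 1 / (1 + c) := by
    rw [hs_def, div_pow, one_pow, Real.sq_sqrt h1c.le]
  have hκ : 1 - c * s - s^2 < 0 := by
    have h1 : c / (1 + c) < c * s := by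
      rw [hs_def, mul_one_div, div_lt_div_iff₀ h1c hsqrt_pos]
      nlinarith
    have : (1:ℝ) = 1/(1+c) + c/(1+c) := by field_simp
    nlinarith [hs2]
  have hCpos : 0 < 1 - s^2 := by nlinarith
  -- u ≤ t on [0,∞)
  have hu_le : ∀ t, 0 ≤ t → f t ≤ t * deriv f t := by
    intro t ht
    have h := jacobi_aux_mono_Icc (φ := fun x => x * deriv f x - f x)
      (φ' := fun x => 1 * deriv f x + x * deriv (deriv f) x - deriv f x) ht
      (fun x _ => ((hasDerivAt_id x).mul ((hf'd x).hasDerivAt)).sub (hfd x).hasDerivAt)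
      (fun x hx => by
        have hx0 : 0 ≤ x := hx.1.le
        show 0 ≤ 1 * deriv f x + x * deriv (deriv f) x - deriv f x
        rw [hjacobi x hx0]
        have h1 : 0 ≤ x * (a x ^ 2 * f x) :=
          mul_nonneg hx.1.le (mul_nonneg (sq_nonneg _) (hf_pos x hx.1).le)
        linarith)
    simp only [hf0, zero_mul, sub_zero] at h
    linarith
  rcases halt with hna | ⟨hint, htend⟩
  · -- case (a): ∫ a = ∞
    set T : ℝ := max t₁ 1 with hT_def
    have hT1 : (1:ℝ) ≤ T := le_max_right _ _
    have hTt₁ : t₁ ≤ T := le_max_left _ _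
    have hT0 : 0 < T := by linarith
    -- the integral function
    have hGd : ∀ x : ℝ, HasDerivAt (fun y => ∫ z in T..y, a z) (a x) x :=
      fun x => (hacont.integral_hasStrictDerivAt T x).hasDerivAt
    -- unboundedness of G
    have hGunb : ∀ B : ℝ, ∃ t, T ≤ t ∧ B ≤ ∫ z in T..t, a z := by
      by_contra h
      push_neg at h
      obtain ⟨B, hB⟩ := h
      have hIoi : MeasureTheory.IntegrableOn a (Set.Ioi T) := by
        apply MeasureTheory.integrableOn_Ioi_of_intervalIntegral_norm_bounded B T
          (b := fun n : ℕ => T + n) (l := atTop)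
          (fun n => hacont.integrableOn_Ioc)
          (tendsto_atTop_add_const_left atTop T tendsto_natCast_atTop_atTop)
        apply Filter.Eventually.of_forall
        intro n
        have hTn : T ≤ T + (n:ℝ) := le_add_of_nonneg_right n.cast_nonneg
        have heq : (∫ x in T..(T + (n:ℝ)), ‖a x‖) = ∫ x in T..(T + (n:ℝ)), a x := by
          apply intervalIntegral.integral_congr
          intro x hx
          rw [Set.uIcc_of_le hTn] at hx
          exact Real.norm_of_nonneg (ha_nonneg x (by linarith [hx.1]))
        rw [heq]
        exact (hB (T + n) hTn).le
      apply hna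
      have h1 : MeasureTheory.IntegrableOn a (Set.Icc 0 T) := hacont.integrableOn_Icc
      apply (h1.union hIoi).mono_set
      intro x hx
      by_cases hxT : x ≤ T
      · exact Or.inl ⟨hx, hxT⟩
      · exact Or.inr (lt_of_not_ge hxT)
    -- Step B : v gets below s
    have hstepB : ∃ T₂, T ≤ T₂ ∧ a T₂ * (f T₂ / deriv f T₂) ≤ s := by
      by_contra h
      push_neg at h
      obtain ⟨t, htT, htB⟩ := hGunb ((a T * (f T / deriv f T) + 1) / (c * s + s^2 - 1))
      have hκ' : 0 < c * s + s^2 - 1 := by linarith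
      have hmono : -(a T * (f T / deriv f T) + (c * s + s^2 - 1) * ∫ z in T..T, a z) ≤
          -(a t * (f t / deriv f t) + (c * s + s^2 - 1) * ∫ z in T..t, a z) := by
        apply jacobi_aux_mono_Icc
          (φ := fun x => -(a x * (f x / deriv f x) + (c * s + s^2 - 1) * ∫ z in T..x, a z))
          (φ' := fun x => -((deriv a x * (f x / deriv f x) +
            a x * (1 - (a x)^2 * (f x / deriv f x)^2)) + (c * s + s^2 - 1) * a x)) htT
        · intro x hx
          have hx0 : (0:ℝ) ≤ x := by linarith [hx.1]
          exact ((hvd x hx0).add ((hGd x).const_mul _)).neg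
        · intro x hx
          have hxT : T ≤ x := hx.1.le
          have hxt₁ : t₁ ≤ x := le_trans hTt₁ hxT
          have key := hkey x hxt₁
          have hvx : s < a x * (f x / deriv f x) := h x hxT
          have hax : 0 ≤ a x := (ha_pos x (le_trans ht₁ hxt₁)).le
          have h1 : 1 - c * (a x * (f x / deriv f x)) - (a x * (f x / deriv f x))^2 ≤
              1 - c * s - s^2 := by nlinarith
          have h2 := mul_le_mul_of_nonneg_left h1 hax
          nlinarith [key]
      rw [intervalIntegral.integral_same, mul_zero, add_zero] at hmono
      have hvt : 0 ≤ a t * (f t / deriv f t) := by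
        have htpos : 0 < t := lt_of_lt_of_le hT0 htT
        exact mul_nonneg (ha_nonneg t htpos.le)
          (div_nonneg (hf_pos t htpos).le (hf'pos t htpos.le).le)
      have h3 := mul_le_mul_of_nonneg_left htB hκ'.le
      rw [mul_div_cancel₀ _ hκ'.ne'] at h3
      nlinarith
    obtain ⟨T₂, hTT₂, hvT₂⟩ := hstepB
    have hT₂0 : 0 < T₂ := lt_of_lt_of_le hT0 hTT₂
    -- Step C : v stays below s
    have hstepC : ∀ t, T₂ ≤ t → a t * (f t / deriv f t) ≤ s := by
      intro t ht
      by_contra hgt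
      push_neg at hgt
      set S := {x | x ∈ Set.Icc T₂ t ∧ a x * (f x / deriv f x) ≤ s} with hS_def
      have hne : T₂ ∈ S := ⟨Set.left_mem_Icc.mpr ht, hvT₂⟩
      have hbdd : BddAbove S := ⟨t, fun x hx => hx.1.2⟩
      have hclosed : IsClosed S := by
        have hcont : ContinuousOn (fun x => a x * (f x / deriv f x)) (Set.Icc T₂ t) :=
          fun x hx => ((hvd x (by linarith [hx.1] : (0:ℝ) ≤ x)).continuousAt).continuousWithinAt
        have : S = Set.Icc T₂ t ∩ (fun x => a x * (f x / deriv f x)) ⁻¹' Set.Iic s := rfl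
        rw [this]
        exact hcont.preimage_isClosed_of_isClosed isClosed_Icc isClosed_Iic
      set t₃ := sSup S with ht₃_def
      have ht₃mem : t₃ ∈ S := hclosed.csSup_mem ⟨T₂, hne⟩ hbdd
      have ht₃t : t₃ < t := by
        rcases lt_or_eq_of_le ht₃mem.1.2 with h | h
        · exact h
        · exact absurd (h ▸ ht₃mem.2) (not_le.mpr hgt)
      have hgt' : ∀ x, t₃ < x → x ≤ t → s < a x * (f x / deriv f x) := by
        intro x hx1 hx2
        by_contra hle
        push_neg at hle
        have hxS : x ∈ S := ⟨⟨le_trans ht₃mem.1.1 hx1.le, hx2⟩, hle⟩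
        exact absurd (le_csSup hbdd hxS) (not_le.mpr hx1)
      have hmono : -(a t₃ * (f t₃ / deriv f t₃)) ≤ -(a t * (f t / deriv f t)) := by
        apply jacobi_aux_mono_Icc
          (φ := fun x => -(a x * (f x / deriv f x)))
          (φ' := fun x => -(deriv a x * (f x / deriv f x) +
            a x * (1 - (a x)^2 * (f x / deriv f x)^2))) ht₃t.le
        · intro x hx
          have hx0 : (0:ℝ) ≤ x := by linarith [hx.1, ht₃mem.1.1, hT₂0]
          exact (hvd x hx0).neg
        · intro x hx
          have hxT₂ : T₂ ≤ x := le_trans ht₃mem.1.1 hx.1.le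
          have hxt₁ : t₁ ≤ x := le_trans (le_trans hTt₁ hTT₂) hxT₂
          have key := hkey x hxt₁
          have hvx : s < a x * (f x / deriv f x) := hgt' x hx.1 hx.2.le
          have hax : 0 ≤ a x := (ha_pos x (le_trans ht₁ hxt₁)).le
          have h1 : 1 - c * (a x * (f x / deriv f x)) - (a x * (f x / deriv f x))^2 ≤
              1 - c * s - s^2 := by nlinarith
          have h2 := mul_le_mul_of_nonneg_left h1 hax
          nlinarith [key]
      have := ht₃mem.2
      nlinarith
    -- pointwise derivative lower bound
    have hC : ∀ t, T₂ ≤ t → 1 - s^2 ≤ 1 - (a t)^2 * (f t / deriv f t)^2 := by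
      intro t ht
      have htpos : 0 < t := lt_of_lt_of_le hT₂0 ht
      have hv0 : 0 ≤ a t * (f t / deriv f t) :=
        mul_nonneg (ha_nonneg t htpos.le) (div_nonneg (hf_pos t htpos).le (hf'pos t htpos.le).le)
      have hvs := hstepC t ht
      nlinarith [pow_le_pow_left₀ hv0 hvs 2]
    -- linear growth of u
    have hgrow : ∀ t, T₂ ≤ t →
        f T₂ / deriv f T₂ + (1 - s^2) * (t - T₂) ≤ f t / deriv f t := by
      intro t ht
      have h := jacobi_aux_mono_Icc
        (φ := fun x => f x / deriv f x - (1 - s^2) * x)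
        (φ' := fun x => (1 - (a x)^2 * (f x / deriv f x)^2) - (1 - s^2) * 1) ht
        (fun x hx => (hud x (by linarith [hx.1, hT₂0] : (0:ℝ) ≤ x)).sub
          ((hasDerivAt_id x).const_mul _))
        (fun x hx => by
          have := hC x hx.1.le
          linarith)
      linarith
    constructor
    · refine tendsto_atTop_mono' atTop ((eventually_ge_atTop T₂).mono hgrow) ?_
      apply tendsto_atTop_add_const_left
      apply Tendsto.const_mul_atTop hCpos
      simpa [sub_eq_add_neg] using tendsto_atTop_add_const_right atTop (-T₂) tendsto_id
    · refine ⟨1 - s^2, hCpos, T₂, hT₂0, fun t ht => ?_⟩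
      rw [(hud t (by linarith : (0:ℝ) ≤ t)).deriv]
      exact hC t ht
  · -- case (b): contradictory
    exfalso
    -- bound a t * t ≤ 2/c for t ≥ 2 t₁
    have hbound : ∀ t, 2 * t₁ ≤ t → a t * t ≤ 2 / c := by
      intro t ht
      have htt₁ : t₁ ≤ t := by linarith
      have htpos : 0 < t := by linarith
      have hat : 0 < a t := ha_pos t (le_trans ht₁ htt₁)
      have hstep : (a t₁)⁻¹ - c * t₁ ≤ (a t)⁻¹ - c * t := by
        apply jacobi_aux_mono_Icc
          (φ := fun x => (a x)⁻¹ - c * x)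
          (φ' := fun x => -deriv a x / (a x)^2 - c * 1) htt₁
        · intro x hx
          have hax : 0 < a x := ha_pos x (le_trans ht₁ hx.1)
          exact (((had x).hasDerivAt).inv hax.ne').sub ((hasDerivAt_id x).const_mul c)
        · intro x hx
          have hax : 0 < a x := ha_pos x (le_trans ht₁ hx.1.le)
          have hd := hdecay x hx.1.le
          rw [sub_nonneg, mul_one, le_div_iff₀ (by positivity : (0:ℝ) < (a x)^2)]
          nlinarith
      have hinv : c * t / 2 ≤ (a t)⁻¹ := by
        have ha1 : 0 < (a t₁)⁻¹ := by
          have := ha_pos t₁ ht₁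
          positivity
        nlinarith
      have h1 : a t * (c * t / 2) ≤ a t * (a t)⁻¹ := mul_le_mul_of_nonneg_left hinv hat.le
      rw [mul_inv_cancel₀ hat.ne'] at h1
      rw [le_div_iff₀ hc]
      nlinarith [h1]
    set T₃ : ℝ := 2 * t₁ + 1 with hT₃_def
    have hT₃pos : 0 < T₃ := by linarith
    set A : ℝ := ∫ x in Set.Ici (0:ℝ), a x with hA_def
    -- logarithmic bound on f'
    have hlog : ∀ t, T₃ ≤ t →
        Real.log (deriv f t) ≤ Real.log (deriv f T₃) + (2 / c) * A := by
      intro t ht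
      have hmono : (2/c) * (∫ y in T₃..T₃, a y) - Real.log (deriv f T₃) ≤
          (2/c) * (∫ y in T₃..t, a y) - Real.log (deriv f t) := by
        apply jacobi_aux_mono_Icc
          (φ := fun x => (2/c) * (∫ y in T₃..x, a y) - Real.log (deriv f x))
          (φ' := fun x => (2/c) * a x - deriv (deriv f) x / deriv f x) ht
        · intro x hx
          have hx0 : (0:ℝ) ≤ x := by linarith [hx.1]
          exact (((hacont.integral_hasStrictDerivAt T₃ x).hasDerivAt).const_mul (2/c)).sub
            (((hf'd x).hasDerivAt).log (hf'pos x hx0).ne')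
        · intro x hx
          have hx0 : (0:ℝ) ≤ x := by linarith [hx.1]
          have hx2t₁ : 2 * t₁ ≤ x := by linarith [hx.1]
          have h2c : a x * x ≤ 2 / c := hbound x hx2t₁
          have hfx : f x ≤ x * deriv f x := hu_le x hx0
          have hf'x : 0 < deriv f x := hf'pos x hx0
          have hax : 0 ≤ a x := ha_nonneg x hx0
          rw [hjacobi x hx0, sub_nonneg, div_le_iff₀ hf'x]
          calc (a x)^2 * f x ≤ (a x)^2 * (x * deriv f x) := by nlinarith [sq_nonneg (a x)]
            _ ≤ 2 / c * a x * deriv f x := by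
                nlinarith [mul_le_mul_of_nonneg_right h2c (mul_nonneg hax hf'x.le)]
      rw [intervalIntegral.integral_same, mul_zero, zero_sub] at hmono
      have hGle : (∫ y in T₃..t, a y) ≤ A := by
        rw [intervalIntegral.integral_of_le ht, hA_def]
        apply MeasureTheory.setIntegral_mono_set hint
        · exact (MeasureTheory.ae_restrict_iff' measurableSet_Ici).mpr
            (Filter.Eventually.of_forall (fun x hx => ha_nonneg x hx))
        · exact Filter.Eventually.of_forall
            (fun x hx => Set.mem_Ici.mpr (le_trans hT₃pos.le hx.1.le))
      have h2c0 : (0:ℝ) ≤ 2 / c := by positivity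
      nlinarith [mul_le_mul_of_nonneg_left hGle h2c0]
    -- f' is bounded, contradiction with tendsto atTop
    set B : ℝ := Real.exp (Real.log (deriv f T₃) + (2 / c) * A) with hB_def
    have hub : ∀ t, T₃ ≤ t → deriv f t ≤ B := by
      intro t ht
      have hf't : 0 < deriv f t := hf'pos t (by linarith)
      calc deriv f t = Real.exp (Real.log (deriv f t)) := (Real.exp_log hf't).symm
        _ ≤ B := Real.exp_le_exp.mpr (hlog t ht)
    have hev : ∀ᶠ t in atTop, B + 1 ≤ deriv f t := htend.eventually (eventually_ge_atTop (B + 1))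
    obtain ⟨t, ht1, ht2⟩ := ((eventually_ge_atTop T₃).and hev).exists
    linarith [hub t ht1]
end

section
/- Let φ be an entire solution of the radial translating-soliton ODE on (R,∞). Then for every ε ∈ (0,1) and every r₀ > R there exists r₁ > r₀ such that φ(r₁) > (1−ε)·(c/(n−1))·ξ(r₁)/ξ'(r₁). -/
open Filter

/-- Let `n ≥ 2`, `c > 0`, and let `ξ` be a warping function of a
rotationally symmetric Cartan–Hadamard manifold (`ξ 0 = 0`, `ξ' 0 = 1`, `ξ'' ≥ 0`,
hence `ξ > 0` and `ξ' ≥ 1` on `(0,∞)`).  Let `φ` be an entire solution on `(R,∞)` of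
the radial translating-soliton ODE `φ' = (1 + φ²)(c − (n−1)(ξ'/ξ)φ)`.
Then for every `ε ∈ (0,1)` and every `r₀ > R` there exists `r₁ > r₀` with
`φ(r₁) > (1−ε)·(c/(n−1))·ξ(r₁)/ξ'(r₁)`. -/
theorem soliton_ode_lower_crossing
    (n : ℕ) (hn : 2 ≤ n) (c : ℝ) (hc : 0 < c)
    (ξ : ℝ → ℝ) (hξ_smooth : ContDiff ℝ (⊤ : ℕ∞) ξ)
    (hξ0 : ξ 0 = 0) (hξ'0 : deriv ξ 0 = 1)
    (hξ'' : ∀ r, 0 ≤ r → 0 ≤ deriv (deriv ξ) r)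
    (hξ_pos : ∀ r, 0 < r → 0 < ξ r)
    (hξ'_ge : ∀ r, 0 < r → 1 ≤ deriv ξ r)
    (φ : ℝ → ℝ) (R : ℝ) (hR : 0 ≤ R)
    (hode : ∀ r, R < r →
      HasDerivAt φ ((1 + (φ r)^2) * (c - ((n : ℝ) - 1) * (deriv ξ r / ξ r) * φ r)) r) :
    ∀ ε : ℝ, 0 < ε → ε < 1 → ∀ r₀, R < r₀ → ∃ r₁, r₀ < r₁ ∧
      (1 - ε) * (c / ((n : ℝ) - 1)) * (ξ r₁ / deriv ξ r₁) < φ r₁ := by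
  intro ε hε hε1 r₀ hr₀
  by_contra hcon
  push_neg at hcon
  set m : ℝ := ε * c / 2 with hm
  have hmpos : 0 < m := by positivity
  have hn1 : (0:ℝ) < (n : ℝ) - 1 := by
    have : (2:ℝ) ≤ (n:ℝ) := by exact_mod_cast hn
    linarith
  -- g is strictly increasing on Ioi r₀
  set g : ℝ → ℝ := fun r => Real.arctan (φ r) - m * r with hg
  have hderiv : ∀ r, r₀ < r →
      HasDerivAt g (c - ((n : ℝ) - 1) * (deriv ξ r / ξ r) * φ r - m) r := by
    intro r hr
    have hrR : R < r := lt_trans hr₀ hr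
    have h1 : (0:ℝ) < 1 + (φ r)^2 := by positivity
    have ha := (hode r hrR).arctan
    have hb : (1 / (1 + φ r ^ 2) * ((1 + (φ r)^2) * (c - ((n : ℝ) - 1) * (deriv ξ r / ξ r) * φ r)))
        = c - ((n : ℝ) - 1) * (deriv ξ r / ξ r) * φ r := by
      field_simp
    rw [hb] at ha
    have h3 := ha.sub ((hasDerivAt_id r).const_mul m)
    rw [mul_one] at h3
    exact h3
  have hpos : ∀ r, r₀ < r → 0 < c - ((n : ℝ) - 1) * (deriv ξ r / ξ r) * φ r - m := by
    intro r hr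
    have hrpos : 0 < r := lt_of_le_of_lt hR (lt_trans hr₀ hr)
    have hξr : 0 < ξ r := hξ_pos r hrpos
    have hξ'r : (1:ℝ) ≤ deriv ξ r := hξ'_ge r hrpos
    have hφle : φ r ≤ (1 - ε) * (c / ((n : ℝ) - 1)) * (ξ r / deriv ξ r) := hcon r hr
    have hcoef : 0 < ((n : ℝ) - 1) * (deriv ξ r / ξ r) := by positivity
    have hmul : ((n : ℝ) - 1) * (deriv ξ r / ξ r) * φ r
        ≤ ((n : ℝ) - 1) * (deriv ξ r / ξ r) * ((1 - ε) * (c / ((n : ℝ) - 1)) * (ξ r / deriv ξ r)) :=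
      mul_le_mul_of_nonneg_left hφle hcoef.le
    have heq : ((n : ℝ) - 1) * (deriv ξ r / ξ r) * ((1 - ε) * (c / ((n : ℝ) - 1)) * (ξ r / deriv ξ r))
        = (1 - ε) * c := by
      field_simp
    rw [heq] at hmul
    have : m < ε * c := by rw [hm]; linarith [mul_pos hε hc]
    nlinarith
  have hmono : StrictMonoOn g (Set.Ioi r₀) := by
    apply strictMonoOn_of_deriv_pos (convex_Ioi r₀)
    · intro x hx
      exact ((hderiv x hx).continuousAt).continuousWithinAt
    · intro x hx
      rw [interior_Ioi] at hx
      rw [(hderiv x hx).deriv]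
      exact hpos x hx
  -- contradiction via boundedness of arctan
  set a : ℝ := r₀ + 1 with ha
  set b : ℝ := a + Real.pi / m + 1 with hb
  have haI : a ∈ Set.Ioi r₀ := by simp [ha]
  have hab : a < b := by
    have : 0 < Real.pi / m := by positivity
    simp only [hb]; linarith
  have hbI : b ∈ Set.Ioi r₀ := lt_trans haI hab
  have hgab : g a < g b := hmono haI hbI hab
  have h1 : Real.arctan (φ a) > -(Real.pi / 2) := Real.neg_pi_div_two_lt_arctan _
  have h2 : Real.arctan (φ b) < Real.pi / 2 := Real.arctan_lt_pi_div_two _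
  have hmba : m * (b - a) = Real.pi + m := by
    have : b - a = Real.pi / m + 1 := by simp [hb]; ring
    rw [this]; field_simp
  have : Real.arctan (φ a) - m * a < Real.arctan (φ b) - m * b := hgab
  nlinarith [Real.pi_pos]
end

section
/- Let φ be an entire solution of the radial translating-soliton ODE on (R,∞). Then for every ε > 0 and every r₀ > R there exists r₁ > r₀ such that φ(r₁) < (1+ε)·(c/(n−1))·ξ(r₁)/ξ'(r₁). -/
open Filter

/-- Let `n ≥ 2`, `c > 0`, and let `ξ` be a warping function of a
rotationally symmetric Cartan–Hadamard manifold (`ξ 0 = 0`, `ξ' 0 = 1`, `ξ'' ≥ 0`,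
hence `ξ > 0` and `ξ' ≥ 1` on `(0,∞)`).  Let `φ` be an entire solution on `(R,∞)` of
the radial translating-soliton ODE `φ' = (1 + φ²)(c − (n−1)(ξ'/ξ)φ)`.
Then for every `ε > 0` and every `r₀ > R` there exists `r₁ > r₀` with
`φ(r₁) < (1+ε)·(c/(n−1))·ξ(r₁)/ξ'(r₁)`. -/
theorem soliton_ode_upper_crossing
    (n : ℕ) (hn : 2 ≤ n) (c : ℝ) (hc : 0 < c)
    (ξ : ℝ → ℝ) (hξ_smooth : ContDiff ℝ (⊤ : ℕ∞) ξ)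
    (hξ0 : ξ 0 = 0) (hξ'0 : deriv ξ 0 = 1)
    (hξ'' : ∀ r, 0 ≤ r → 0 ≤ deriv (deriv ξ) r)
    (hξ_pos : ∀ r, 0 < r → 0 < ξ r)
    (hξ'_ge : ∀ r, 0 < r → 1 ≤ deriv ξ r)
    (φ : ℝ → ℝ) (R : ℝ) (hR : 0 ≤ R)
    (hode : ∀ r, R < r →
      HasDerivAt φ ((1 + (φ r)^2) * (c - ((n : ℝ) - 1) * (deriv ξ r / ξ r) * φ r)) r) :
    ∀ ε : ℝ, 0 < ε → ∀ r₀, R < r₀ → ∃ r₁, r₀ < r₁ ∧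
      φ r₁ < (1 + ε) * (c / ((n : ℝ) - 1)) * (ξ r₁ / deriv ξ r₁) := by
  intro ε hε r₀ hr₀
  by_contra hcon
  push_neg at hcon
  have hn1 : (1 : ℝ) ≤ (n : ℝ) - 1 := by
    have : (2 : ℝ) ≤ (n : ℝ) := by exact_mod_cast hn
    linarith
  -- lower bound: φ ≥ threshold for all r > r₀
  have hge : ∀ r, r₀ < r → (1 + ε) * (c / ((n : ℝ) - 1)) * (ξ r / deriv ξ r) ≤ φ r := by
    intro r hr
    by_contra h
    push_neg at h
    exact absurd (hcon r hr) (not_le.mpr h)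
  -- auxiliary function ψ r = φ r + ε c r is antitone on [r₀, ∞)
  set ψ : ℝ → ℝ := fun r => φ r + ε * c * r with hψ
  have hanti : AntitoneOn ψ (Set.Ici r₀) := by
    apply antitoneOn_of_deriv_nonpos (convex_Ici r₀)
    · intro x hx
      have hxR : R < x := lt_of_lt_of_le hr₀ hx
      exact (((hode x hxR).add ((hasDerivAt_id x).const_mul (ε * c))).continuousAt).continuousWithinAt
    · intro x hx
      rw [interior_Ici] at hx
      have hxR : R < x := lt_trans hr₀ hx
      exact (((hode x hxR).add ((hasDerivAt_id x).const_mul (ε * c))).differentiableAt).differentiableWithinAt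
    · intro x hx
      rw [interior_Ici] at hx
      have hxR : R < x := lt_trans hr₀ hx
      have hx0 : 0 < x := lt_of_le_of_lt hR hxR
      have hA : 0 < ξ x := hξ_pos x hx0
      have hB : (1 : ℝ) ≤ deriv ξ x := hξ'_ge x hx0
      have hBpos : (0 : ℝ) < deriv ξ x := lt_of_lt_of_le one_pos hB
      have hd : HasDerivAt ψ
          ((1 + (φ x)^2) * (c - ((n : ℝ) - 1) * (deriv ξ x / ξ x) * φ x) + ε * c * 1) x := by
        exact (hode x hxR).add ((hasDerivAt_id x).const_mul (ε * c))
      rw [hd.deriv]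
      -- key: K * φ x ≥ (1+ε) c where K = (n-1) ξ'/ξ
      have hKpos : 0 < ((n : ℝ) - 1) * (deriv ξ x / ξ x) := by positivity
      have hφx := hge x hx
      have hmul : (1 + ε) * c ≤ ((n : ℝ) - 1) * (deriv ξ x / ξ x) * φ x := by
        have h1 : ((n : ℝ) - 1) * (deriv ξ x / ξ x) *
            ((1 + ε) * (c / ((n : ℝ) - 1)) * (ξ x / deriv ξ x)) = (1 + ε) * c := by
          field_simp
        calc (1 + ε) * c
            = ((n : ℝ) - 1) * (deriv ξ x / ξ x) *
              ((1 + ε) * (c / ((n : ℝ) - 1)) * (ξ x / deriv ξ x)) := h1.symm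
          _ ≤ ((n : ℝ) - 1) * (deriv ξ x / ξ x) * φ x :=
              mul_le_mul_of_nonneg_left hφx (le_of_lt hKpos)
      have ht : c - ((n : ℝ) - 1) * (deriv ξ x / ξ x) * φ x ≤ -(ε * c) := by linarith
      nlinarith [sq_nonneg (φ x), mul_nonneg (sq_nonneg (φ x))
        (by nlinarith : (0:ℝ) ≤ ((n : ℝ) - 1) * (deriv ξ x / ξ x) * φ x - c)]
  -- go far enough out
  set b : ℝ := r₀ + (|φ r₀| + 1) / (ε * c) with hb
  have hεc : 0 < ε * c := mul_pos hε hc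
  have hbr : r₀ < b := by
    have : 0 < (|φ r₀| + 1) / (ε * c) := by positivity
    rw [hb]; linarith [this]
  have hψle : ψ b ≤ ψ r₀ := hanti Set.self_mem_Ici (le_of_lt hbr) (le_of_lt hbr)
  have hcalc : ε * c * b = ε * c * r₀ + (|φ r₀| + 1) := by
    rw [hb]; field_simp
  have hφb_neg : φ b < 0 := by
    have : φ b + ε * c * b ≤ φ r₀ + ε * c * r₀ := hψle
    have habs : φ r₀ ≤ |φ r₀| := le_abs_self _
    linarith [hcalc]
  -- but φ b > 0
  have hb0 : 0 < b := lt_of_le_of_lt hR (lt_trans hr₀ hbr)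
  have hA : 0 < ξ b := hξ_pos b hb0
  have hB : (0 : ℝ) < deriv ξ b := lt_of_lt_of_le one_pos (hξ'_ge b hb0)
  have hpos : 0 < (1 + ε) * (c / ((n : ℝ) - 1)) * (ξ b / deriv ξ b) := by positivity
  linarith [hge b hbr]
end

section
/- Assume Condition (i) holds, and let φ be an entire solution of the radial translating-soliton ODE on (R,∞). Then for every ε ∈ (0,1) there exists r₁ > R such that (1−ε)·(c/(n−1))·ξ(r)/ξ'(r) < φ(r) < (1+ε)·(c/(n−1))·ξ(r)/ξ'(r) for all r > r₁. -/
open Filter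

open Real Set in
lemma minmax_eq (x : ℝ) (hx : 0 < x) :
    min (max 1 (x^2)) (max x x⁻¹) = max 1 x := by
  rcases le_total x 1 with h | h
  · have hinv : (1:ℝ) ≤ x⁻¹ := (one_le_inv₀ hx).mpr h
    have h1 : max (1:ℝ) (x^2) = 1 := max_eq_left (by nlinarith)
    have h3 : max x x⁻¹ = x⁻¹ := max_eq_right (h.trans hinv)
    rw [h1, h3, max_eq_left h, min_eq_left hinv]
  · have hinv : x⁻¹ ≤ 1 := inv_le_one_of_one_le₀ h
    have h1 : max (1:ℝ) (x^2) = x^2 := max_eq_right (by nlinarith)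
    have h3 : max x x⁻¹ = x := max_eq_left (hinv.trans h)
    rw [h1, h3, max_eq_right h, min_eq_right (by nlinarith)]

open Real Set in
lemma minmul_le (B x : ℝ) (hB : 0 ≤ B) (hx : 0 ≤ x) :
    min 1 B * max 1 x ≤ 1 + (B*x)^2 := by
  rcases le_total x 1 with h | h
  · rw [max_eq_left h]
    nlinarith [min_le_left (1:ℝ) B, sq_nonneg (B*x), le_min zero_le_one hB]
  · rw [max_eq_right h]
    rcases le_total B 1 with hB1 | hB1
    · rw [min_eq_right hB1]
      rcases le_total (B*x) 1 with h2 | h2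
      · nlinarith [sq_nonneg (B*x)]
      · nlinarith
    · rw [min_eq_left hB1]
      nlinarith [mul_le_mul_of_nonneg_right hB1 hx, sq_nonneg (B*x - 1)]

open Real Set in
lemma decr_on (g g' : ℝ → ℝ) (a b : ℝ) (hab : a ≤ b)
    (hd : ∀ s ∈ Set.Icc a b, HasDerivAt g (g' s) s)
    (h0 : ∀ s ∈ Set.Icc a b, g' s ≤ 0) : g b ≤ g a := by
  have h := antitoneOn_of_deriv_nonpos (convex_Icc a b)
    (fun s hs => (hd s hs).continuousAt.continuousWithinAt)
    (fun s hs => by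
      rw [interior_Icc] at hs
      exact (hd s (Ioo_subset_Icc_self hs)).differentiableAt.differentiableWithinAt)
    (fun s hs => by
      rw [interior_Icc] at hs
      rw [(hd s (Ioo_subset_Icc_self hs)).deriv]
      exact h0 s (Ioo_subset_Icc_self hs))
  exact h (left_mem_Icc.mpr hab) (right_mem_Icc.mpr hab) hab

open Real Set in
lemma first_cross (f f' : ℝ → ℝ) (b : ℝ)
    (hder : ∀ r, b ≤ r → HasDerivAt f (f' r) r)
    (hb : f b < 0)
    (hzero : ∀ r, b ≤ r → f r = 0 → f' r < 0) :
    ∀ r, b ≤ r → f r < 0 := by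
  by_contra hcon
  push_neg at hcon
  obtain ⟨r₂, hr₂b, hr₂⟩ := hcon
  set S : Set ℝ := Set.Ici b ∩ f ⁻¹' Set.Ici 0 with hSdef
  have hSne : S.Nonempty := ⟨r₂, hr₂b, hr₂⟩
  have hSbdd : BddBelow S := ⟨b, fun x hx => hx.1⟩
  have hcont : ContinuousOn f (Set.Ici b) :=
    fun s hs => (hder s hs).continuousAt.continuousWithinAt
  have hScl : IsClosed S := hcont.preimage_isClosed_of_isClosed isClosed_Ici isClosed_Ici
  set t : ℝ := sInf S with htdef
  have htS : t ∈ S := hScl.csInf_mem hSne hSbdd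
  have htb : b ≤ t := htS.1
  have hbt : b < t := by
    rcases eq_or_lt_of_le htb with h | h
    · exfalso; rw [← h] at htS; exact absurd htS.2 (not_le.mpr hb)
    · exact h
  have hneg : ∀ s, b ≤ s → s < t → f s < 0 := by
    intro s hs hst
    by_contra hns
    push_neg at hns
    exact absurd (csInf_le hSbdd ⟨hs, hns⟩) (not_le.mpr hst)
  have hft0 : f t = 0 := by
    have h1 : Tendsto f (nhdsWithin t (Set.Iio t)) (nhds (f t)) :=
      ((hder t htb).continuousAt).continuousWithinAt.tendsto
    have h2 : ∀ᶠ s in nhdsWithin t (Set.Iio t), f s ≤ 0 := by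
      filter_upwards [Ioo_mem_nhdsLT_of_mem (Set.mem_Ioc.mpr ⟨hbt, le_refl t⟩)] with s hs
      exact (hneg s hs.1.le hs.2).le
    have := le_of_tendsto h1 h2
    exact le_antisymm this htS.2
  have hf' : f' t < 0 := hzero t htb hft0
  have hs := hasDerivAt_iff_tendsto_slope.mp (hder t htb)
  have h5 : ∀ᶠ s in nhdsWithin t {t}ᶜ, slope f t s < 0 := hs.eventually_lt_const hf'
  have hmono : nhdsWithin t (Set.Iio t) ≤ nhdsWithin t {t}ᶜ :=
    nhdsWithin_mono t (fun x (hx : x ∈ Set.Iio t) => (ne_of_lt hx : x ≠ t))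
  have h5' : ∀ᶠ s in nhdsWithin t (Set.Iio t), slope f t s < 0 := h5.filter_mono hmono
  have h6 : ∀ᶠ s in nhdsWithin t (Set.Iio t), s ∈ Set.Ioo b t :=
    Ioo_mem_nhdsLT_of_mem (Set.mem_Ioc.mpr ⟨hbt, le_refl t⟩)
  obtain ⟨s, hs1, hs2⟩ := (h5'.and h6).exists
  rw [slope_def_field, hft0] at hs1
  have hst : s - t < 0 := by linarith [hs2.2]
  have : 0 < f s := by
    rcases (div_neg_iff.mp (by simpa using hs1)) with ⟨h1, h2⟩ | ⟨h1, h2⟩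
    · exact h1
    · linarith
  linarith [hneg s hs2.1.le hs2.2]

open Real Set in
set_option maxHeartbeats 1000000 in
/-- Let `n ≥ 2`, `c > 0`, and let `ξ` be a warping function of a
rotationally symmetric Cartan–Hadamard manifold (`ξ 0 = 0`, `ξ' 0 = 1`, `ξ'' ≥ 0`,
hence `ξ > 0` and `ξ' ≥ 1` on `(0,∞)`).  Assume Condition (i):
`(ξ/ξ')'(r) / min{max{1, (ξ/ξ')²}, max{ξ/ξ', ξ'/ξ}} → 0` as `r → ∞`.
Let `φ` be an entire solution on `(R,∞)` of the radial translating-soliton ODE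
`φ' = (1 + φ²)(c − (n−1)(ξ'/ξ)φ)`.  Then for every `ε ∈ (0,1)` there exists
`r₁ > R` such that `(1−ε)·(c/(n−1))·ξ/ξ' < φ < (1+ε)·(c/(n−1))·ξ/ξ'` for all `r > r₁`. -/
theorem soliton_ode_eventual_pinching
    (n : ℕ) (hn : 2 ≤ n) (c : ℝ) (hc : 0 < c)
    (ξ : ℝ → ℝ) (hξ_smooth : ContDiff ℝ (⊤ : ℕ∞) ξ)
    (hξ0 : ξ 0 = 0) (hξ'0 : deriv ξ 0 = 1)
    (hξ'' : ∀ r, 0 ≤ r → 0 ≤ deriv (deriv ξ) r)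
    (hξ_pos : ∀ r, 0 < r → 0 < ξ r)
    (hξ'_ge : ∀ r, 0 < r → 1 ≤ deriv ξ r)
    (hcondi : Tendsto (fun r =>
      deriv (fun s => ξ s / deriv ξ s) r /
        min (max 1 ((ξ r / deriv ξ r)^2)) (max (ξ r / deriv ξ r) (deriv ξ r / ξ r)))
      atTop (nhds 0))
    (φ : ℝ → ℝ) (R : ℝ) (hR : 0 ≤ R)
    (hode : ∀ r, R < r →
      HasDerivAt φ ((1 + (φ r)^2) * (c - ((n : ℝ) - 1) * (deriv ξ r / ξ r) * φ r)) r) :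
    ∀ ε : ℝ, 0 < ε → ε < 1 → ∃ r₁, R < r₁ ∧ ∀ r, r₁ < r →
      (1 - ε) * (c / ((n : ℝ) - 1)) * (ξ r / deriv ξ r) < φ r ∧
      φ r < (1 + ε) * (c / ((n : ℝ) - 1)) * (ξ r / deriv ξ r) := by
  intro ε hε0 hε1
  have hn1 : (1:ℝ) ≤ (n:ℝ) - 1 := by
    have : (2:ℝ) ≤ (n:ℝ) := by exact_mod_cast hn
    linarith
  have hn0 : (0:ℝ) < (n:ℝ) - 1 := by linarith
  obtain ⟨k, hkdef⟩ : ∃ k : ℝ, k = c / ((n:ℝ) - 1) := ⟨_, rfl⟩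
  have hk0 : 0 < k := hkdef ▸ div_pos hc hn0
  set H : ℝ → ℝ := fun s => ξ s / deriv ξ s with hHdef
  obtain ⟨δ, hδdef⟩ : ∃ δ : ℝ, δ = ε * c * (1 - ε) * min 1 k / (4 * k) := ⟨_, rfl⟩
  have hm0 : 0 < min 1 k := lt_min one_pos hk0
  have hδ0 : 0 < δ := by
    rw [hδdef]
    exact div_pos (mul_pos (mul_pos (mul_pos hε0 hc) (by linarith)) hm0) (by linarith)
  have hdξ : Differentiable ℝ ξ := hξ_smooth.differentiable (by simp)
  have hdξ2 : Differentiable ℝ (deriv ξ) :=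
    (contDiff_infty_iff_deriv.mp (hξ_smooth.of_le (by simp))).2.differentiable (by simp)
  have hξ'pos : ∀ r, 0 < r → 0 < deriv ξ r := fun r hr =>
    lt_of_lt_of_le one_pos (hξ'_ge r hr)
  have hHpos : ∀ r, 0 < r → 0 < H r := fun r hr =>
    div_pos (hξ_pos r hr) (hξ'pos r hr)
  have hHd : ∀ r, 0 < r → HasDerivAt H (deriv H r) r := fun r hr =>
    (((hdξ r).div (hdξ2 r) (ne_of_gt (hξ'pos r hr)))).hasDerivAt
  -- extract quantitative bound from Condition (i)
  have hcond2 : ∀ᶠ r in atTop, |deriv H r| ≤ δ * max 1 (H r) := by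
    have h1 := Metric.tendsto_nhds.mp hcondi δ hδ0
    filter_upwards [h1, eventually_gt_atTop 0] with r hr hrpos
    have hHr : 0 < H r := hHpos r hrpos
    rw [Real.dist_eq, sub_zero] at hr
    have hden : min (max 1 ((ξ r / deriv ξ r)^2)) (max (ξ r / deriv ξ r) (deriv ξ r / ξ r))
        = max 1 (H r) := by
      have h2 : deriv ξ r / ξ r = (H r)⁻¹ := by
        show deriv ξ r / ξ r = (ξ r / deriv ξ r)⁻¹
        rw [inv_div]
      have h3 : (ξ r / deriv ξ r) = H r := rfl
      rw [h2, h3, minmax_eq (H r) hHr]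
    rw [hden] at hr
    have hmaxpos : 0 < max 1 (H r) := lt_of_lt_of_le one_pos (le_max_left _ _)
    rw [abs_div, abs_of_pos hmaxpos, div_lt_iff₀ hmaxpos] at hr
    exact hr.le
  obtain ⟨a, ha⟩ := eventually_atTop.mp hcond2
  set r₀ : ℝ := max a (max (R+1) 1) with hr₀def
  have hr₀R : R < r₀ := lt_of_lt_of_le (by linarith) ((le_max_left (R+1) 1).trans (le_max_right a _))
  have hr₀1 : (1:ℝ) ≤ r₀ := (le_max_right (R+1) 1).trans (le_max_right a _)
  have hbound : ∀ r, r₀ ≤ r → |deriv H r| ≤ δ * max 1 (H r) :=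
    fun r hr => ha r ((le_max_left _ _).trans hr)
  have hrpos : ∀ r, r₀ ≤ r → 0 < r := fun r hr => lt_of_lt_of_le one_pos (hr₀1.trans hr)
  have hrR : ∀ r, r₀ ≤ r → R < r := fun r hr => lt_of_lt_of_le hr₀R hr
  -- the key barrier estimate
  have keyA : ∀ A : ℝ, (1-ε)*k ≤ A → A ≤ 2*k → ∀ r, r₀ ≤ r →
      A * |deriv H r| < ε * c * (1 + (A * H r)^2) := by
    intro A hA1 hA2 r hr
    have hA0 : 0 < A := lt_of_lt_of_le (mul_pos (by linarith) hk0) hA1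
    have hHr : 0 < H r := hHpos r (hrpos r hr)
    have hb := hbound r hr
    have hmin : (1-ε) * min 1 k ≤ min 1 A := by
      rcases le_total 1 A with h | h
      · rw [min_eq_left h]
        nlinarith [min_le_left (1:ℝ) k, hm0]
      · rw [min_eq_right h]
        nlinarith [min_le_right (1:ℝ) k]
    have hL := minmul_le A (H r) hA0.le hHr.le
    have hmaxpos : (0:ℝ) < max 1 (H r) := lt_of_lt_of_le one_pos (le_max_left _ _)
    have h2 : A * |deriv H r| ≤ 2*k * (δ * max 1 (H r)) :=
      mul_le_mul hA2 hb (abs_nonneg _) (by linarith)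
    have h3 : 2*k * (δ * max 1 (H r)) = ε*c/2 * ((1-ε) * min 1 k * max 1 (H r)) := by
      rw [hδdef]; field_simp; ring
    have h4 : (1-ε) * min 1 k * max 1 (H r) ≤ 1 + (A * H r)^2 :=
      le_trans (mul_le_mul_of_nonneg_right hmin hmaxpos.le) hL
    have hpos : (0:ℝ) < 1 + (A * H r)^2 := by positivity
    have h5 : ε*c/2 * ((1-ε) * min 1 k * max 1 (H r)) ≤ ε*c/2 * (1 + (A * H r)^2) :=
      mul_le_mul_of_nonneg_left h4 (by linarith [mul_pos hε0 hc])
    have h6 : ε*c/2 * (1 + (A * H r)^2) < ε*c*(1 + (A * H r)^2) := by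
      nlinarith [mul_pos (mul_pos hε0 hc) hpos]
    linarith
  -- derivative identity at a barrier
  have hphi_d : ∀ r, r₀ ≤ r → ∀ A : ℝ, φ r = A * H r →
      (1 + (φ r)^2) * (c - ((n:ℝ)-1) * (deriv ξ r / ξ r) * φ r)
        = (1 + (A * H r)^2) * (c - ((n:ℝ)-1) * A) := by
    intro r hr A hA
    have hξne : ξ r ≠ 0 := ne_of_gt (hξ_pos r (hrpos r hr))
    have hξ'ne : deriv ξ r ≠ 0 := ne_of_gt (hξ'pos r (hrpos r hr))
    rw [hA]
    have h5 : deriv ξ r / ξ r * (A * H r) = A := by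
      show deriv ξ r / ξ r * (A * (ξ r / deriv ξ r)) = A
      field_simp
    rw [mul_assoc ((n:ℝ)-1), h5]
  obtain ⟨Ap, hApdef⟩ : ∃ A : ℝ, A = (1+ε)*k := ⟨_, rfl⟩
  obtain ⟨Am, hAmdef⟩ : ∃ A : ℝ, A = (1-ε)*k := ⟨_, rfl⟩
  have hAp0 : 0 < Ap := by rw [hApdef]; exact mul_pos (by linarith) hk0
  have hAm0 : 0 < Am := by rw [hAmdef]; exact mul_pos (by linarith) hk0
  have hAp1 : (1-ε)*k ≤ Ap := by rw [hApdef]; linarith [mul_pos hε0 hk0]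
  have hAp2 : Ap ≤ 2*k := by rw [hApdef]; linarith [mul_pos (show (0:ℝ) < 1-ε by linarith) hk0]
  have hAm1 : (1-ε)*k ≤ Am := hAmdef.ge
  have hAm2 : Am ≤ 2*k := by rw [hAmdef]; linarith [mul_pos hε0 hk0, hk0]
  have hcu : c - ((n:ℝ)-1)*Ap = -(ε*c) := by
    rw [hApdef, hkdef]
    field_simp
    ring
  have hcl : c - ((n:ℝ)-1)*Am = ε*c := by
    rw [hAmdef, hkdef]
    field_simp
    ring
  obtain ⟨φd, hφddef⟩ : ∃ f : ℝ → ℝ, f = fun r =>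
      (1 + (φ r)^2) * (c - ((n:ℝ)-1) * (deriv ξ r / ξ r) * φ r) := ⟨_, rfl⟩
  have hφdr : ∀ r, φd r = (1 + (φ r)^2) * (c - ((n:ℝ)-1) * (deriv ξ r / ξ r) * φ r) := by
    intro r; rw [hφddef]
  have hode' : ∀ r, r₀ ≤ r → HasDerivAt φ (φd r) r := fun r hr =>
    (hφdr r) ▸ hode r (hrR r hr)
  have hεc : 0 < ε*c := mul_pos hε0 hc
  obtain ⟨T, hTdef⟩ : ∃ T : ℝ, T = (π + 1)/(ε*c) := ⟨_, rfl⟩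
  have hπ : 0 < π := Real.pi_pos
  have hT0 : 0 < T := by rw [hTdef]; exact div_pos (by linarith) hεc
  have hεcT : ε*c*T = π + 1 := by
    rw [hTdef]; field_simp
  -- entry from above
  have entryU : ∃ b, r₀ ≤ b ∧ φ b < Ap * H b := by
    by_contra hcon
    push_neg at hcon
    have hcon' : ∀ b, r₀ ≤ b → Ap * H b ≤ φ b := fun b hb => hcon b hb
    have hg : ∀ s ∈ Set.Icc r₀ (r₀+T),
        HasDerivAt (fun s => Real.arctan (φ s) + ε*c*s)
          (1/(1+(φ s)^2) * φd s + ε*c*1) s := by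
      intro s hs
      exact ((Real.hasDerivAt_arctan (φ s)).comp s (hode' s hs.1)).add
        ((hasDerivAt_id s).const_mul (ε*c))
    have h0 : ∀ s ∈ Set.Icc r₀ (r₀+T), 1/(1+(φ s)^2) * φd s + ε*c*1 ≤ 0 := by
      intro s hs
      have hspos : 0 < s := hrpos s hs.1
      have hle := hcon' s hs.1
      have hq : 0 ≤ ((n:ℝ)-1) * (deriv ξ s / ξ s) := by
        have := hξ'pos s hspos
        have := hξ_pos s hspos
        positivity
      have h5 : deriv ξ s / ξ s * (Ap * H s) = Ap := by
        have hξne : ξ s ≠ 0 := ne_of_gt (hξ_pos s hspos)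
        have hξ'ne : deriv ξ s ≠ 0 := ne_of_gt (hξ'pos s hspos)
        show deriv ξ s / ξ s * (Ap * (ξ s / deriv ξ s)) = Ap
        field_simp
      have h6 : ((n:ℝ)-1) * (deriv ξ s / ξ s) * (Ap * H s) ≤
          ((n:ℝ)-1) * (deriv ξ s / ξ s) * φ s := mul_le_mul_of_nonneg_left hle hq
      have h7 : ((n:ℝ)-1) * (deriv ξ s / ξ s) * (Ap * H s) = ((n:ℝ)-1) * Ap := by
        rw [mul_assoc ((n:ℝ)-1), h5]
      have h8 : c - ((n:ℝ)-1) * (deriv ξ s / ξ s) * φ s ≤ -(ε*c) := by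
        rw [← hcu]; linarith
      have hφ2 : (0:ℝ) < 1 + (φ s)^2 := by positivity
      have h9 : φd s ≤ (1 + (φ s)^2) * (-(ε*c)) := by
        rw [hφdr s]; exact mul_le_mul_of_nonneg_left h8 (by positivity)
      have h10 : 1/(1+(φ s)^2) * φd s ≤ -(ε*c) := by
        have := mul_le_mul_of_nonneg_left h9 (by positivity : (0:ℝ) ≤ 1/(1+(φ s)^2))
        calc 1/(1+(φ s)^2) * φd s ≤ 1/(1+(φ s)^2) * ((1 + (φ s)^2) * (-(ε*c))) := this
          _ = -(ε*c) := by field_simp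
      linarith
    have hdec := decr_on _ _ r₀ (r₀+T) (by linarith) hg h0
    have ha1 := Real.neg_pi_div_two_lt_arctan (φ (r₀+T))
    have ha2 := Real.arctan_lt_pi_div_two (φ r₀)
    have : ε*c*(r₀+T) = ε*c*r₀ + (π+1) := by rw [mul_add, hεcT]
    simp only [this] at hdec
    linarith
  -- entry from below
  have entryL : ∃ b, r₀ ≤ b ∧ Am * H b < φ b := by
    by_contra hcon
    push_neg at hcon
    have hcon' : ∀ b, r₀ ≤ b → φ b ≤ Am * H b := fun b hb => hcon b hb
    have hg : ∀ s ∈ Set.Icc r₀ (r₀+T),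
        HasDerivAt (fun s => ε*c*s - Real.arctan (φ s))
          (ε*c*1 - 1/(1+(φ s)^2) * φd s) s := by
      intro s hs
      exact ((hasDerivAt_id s).const_mul (ε*c)).sub
        ((Real.hasDerivAt_arctan (φ s)).comp s (hode' s hs.1))
    have h0 : ∀ s ∈ Set.Icc r₀ (r₀+T), ε*c*1 - 1/(1+(φ s)^2) * φd s ≤ 0 := by
      intro s hs
      have hspos : 0 < s := hrpos s hs.1
      have hle := hcon' s hs.1
      have hq : 0 ≤ ((n:ℝ)-1) * (deriv ξ s / ξ s) := by
        have := hξ'pos s hspos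
        have := hξ_pos s hspos
        positivity
      have h5 : deriv ξ s / ξ s * (Am * H s) = Am := by
        have hξne : ξ s ≠ 0 := ne_of_gt (hξ_pos s hspos)
        have hξ'ne : deriv ξ s ≠ 0 := ne_of_gt (hξ'pos s hspos)
        show deriv ξ s / ξ s * (Am * (ξ s / deriv ξ s)) = Am
        field_simp
      have h6 : ((n:ℝ)-1) * (deriv ξ s / ξ s) * φ s ≤
          ((n:ℝ)-1) * (deriv ξ s / ξ s) * (Am * H s) := mul_le_mul_of_nonneg_left hle hq
      have h7 : ((n:ℝ)-1) * (deriv ξ s / ξ s) * (Am * H s) = ((n:ℝ)-1) * Am := by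
        rw [mul_assoc ((n:ℝ)-1), h5]
      have h8 : ε*c ≤ c - ((n:ℝ)-1) * (deriv ξ s / ξ s) * φ s := by
        rw [← hcl]; linarith
      have h9 : (1 + (φ s)^2) * (ε*c) ≤ φd s := by
        rw [hφdr s]; exact mul_le_mul_of_nonneg_left h8 (by positivity)
      have h10 : ε*c ≤ 1/(1+(φ s)^2) * φd s := by
        have := mul_le_mul_of_nonneg_left h9 (by positivity : (0:ℝ) ≤ 1/(1+(φ s)^2))
        calc ε*c = 1/(1+(φ s)^2) * ((1 + (φ s)^2) * (ε*c)) := by field_simp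
          _ ≤ 1/(1+(φ s)^2) * φd s := this
      linarith
    have hdec := decr_on _ _ r₀ (r₀+T) (by linarith) hg h0
    have ha1 := Real.arctan_lt_pi_div_two (φ (r₀+T))
    have ha2 := Real.neg_pi_div_two_lt_arctan (φ r₀)
    have : ε*c*(r₀+T) = ε*c*r₀ + (π+1) := by rw [mul_add, hεcT]
    simp only [this] at hdec
    linarith
  obtain ⟨b₁, hb₁0, hb₁⟩ := entryU
  obtain ⟨b₂, hb₂0, hb₂⟩ := entryL
  -- invariance from above
  have hU : ∀ r, b₁ ≤ r → φ r - Ap * H r < 0 := by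
    apply first_cross _ (fun r => φd r - Ap * deriv H r) b₁
    · intro r hr
      exact (hode' r (hb₁0.trans hr)).sub ((hHd r (hrpos r (hb₁0.trans hr))).const_mul Ap)
    · linarith
    · intro r hr hfr
      have hr0 : r₀ ≤ r := hb₁0.trans hr
      have hphir : φ r = Ap * H r := by linarith [sub_eq_zero.mp hfr]
      have hd := hphi_d r hr0 Ap hphir
      have hk2 := keyA Ap hAp1 hAp2 r hr0
      have heq : φd r = (1 + (Ap * H r)^2) * (-(ε*c)) := by
        rw [hφdr r, hd, hcu]
      have habs : Ap * (-|deriv H r|) ≤ Ap * deriv H r :=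
        mul_le_mul_of_nonneg_left (neg_abs_le _) hAp0.le
      nlinarith
  -- invariance from below
  have hL2 : ∀ r, b₂ ≤ r → Am * H r - φ r < 0 := by
    apply first_cross _ (fun r => Am * deriv H r - φd r) b₂
    · intro r hr
      exact ((hHd r (hrpos r (hb₂0.trans hr))).const_mul Am).sub (hode' r (hb₂0.trans hr))
    · linarith
    · intro r hr hfr
      have hr0 : r₀ ≤ r := hb₂0.trans hr
      have hphir : φ r = Am * H r := by linarith [sub_eq_zero.mp hfr]
      have hd := hphi_d r hr0 Am hphir
      have hk2 := keyA Am hAm1 hAm2 r hr0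
      have heq : φd r = (1 + (Am * H r)^2) * (ε*c) := by
        rw [hφdr r, hd, hcl]
      have habs : Am * deriv H r ≤ Am * |deriv H r| :=
        mul_le_mul_of_nonneg_left (le_abs_self _) hAm0.le
      nlinarith
  refine ⟨max b₁ b₂, lt_of_lt_of_le hr₀R (hb₁0.trans (le_max_left _ _)), ?_⟩
  intro r hr
  have h1 := hU r ((le_max_left b₁ b₂).trans hr.le)
  have h2 := hL2 r ((le_max_right b₁ b₂).trans hr.le)
  have hHrfl : H r = ξ r / deriv ξ r := rfl
  constructor
  · have e1 : Am * H r = (1 - ε) * (c / ((n:ℝ) - 1)) * (ξ r / deriv ξ r) := by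
      rw [hAmdef, hkdef, hHrfl]
    linarith
  · have e2 : Ap * H r = (1 + ε) * (c / ((n:ℝ) - 1)) * (ξ r / deriv ξ r) := by
      rw [hApdef, hkdef, hHrfl]
    linarith
end
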